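/- arXiv:2302.06177 — 9 statements merged into one kernel-verified Lean document; each statement's English description precedes it below -/
import Mathlib

section
/- A directed multigraph D with a special vertex s has k arc-disjoint out-branchings rooted at s if and only if every nonempty subset X of V(D) not containing s has in-degree at least k (i.e., at least k arcs enter X). -/
/-!
Lovász's proof. Each out-branching has an arc entering every nonempty `X ∌ s`, and disjoint
branchings give distinct such arcs. Conversely, by induction on `k` it suffices to find one
out-branching `B` such that at least `k - 1` arcs outside `B` still enter every such `X`.
Grow `B` from `s` one arc at a time, keeping this invariant. With `S` the vertices reached so
far, call `X ∌ s` deficient if it meets `V \ S` and only `k - 1` arcs outside `B` enter it.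
If there is none, any arc leaving `S` may be added. Otherwise take an inclusion-minimal
deficient `Z`: more arcs outside `B` enter `Z \ S` (arcs of `B` end in `S`) than `Z`, so one of
them, `a`, goes from `Z ∩ S` into `Z \ S`. If `a` entered a deficient `X`, submodularity of
in-degree would make `X ∩ Z ⊊ Z` deficient; so `a` may be added.
-/

variable {V : Type*}

/-- A digraph (given by its arc relation `A`) is semicomplete if every pair of
distinct vertices is joined by an arc in at least one direction. -/
def Semicomplete (A : V → V → Prop) : Prop :=
  ∀ x y : V, x ≠ y → A x y ∨ A y x

/-- Reachability by a directed path. -/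
def Reach (A : V → V → Prop) : V → V → Prop := Relation.ReflTransGen A

/-- Reachability inside the induced subdigraph on `S`. -/
def ReachOn (A : V → V → Prop) (S : Set V) : V → V → Prop :=
  Relation.ReflTransGen (fun a b => a ∈ S ∧ b ∈ S ∧ A a b)

/-- A digraph is strong if every vertex reaches every other vertex. -/
def Strong (A : V → V → Prop) : Prop := ∀ x y : V, Reach A x y

/-- The induced subdigraph on `S` is strong. -/
def StrongOn (A : V → V → Prop) (S : Set V) : Prop :=
  ∀ a ∈ S, ∀ b ∈ S, ReachOn A S a b

/-- `Out(D)`: vertices which can reach every other vertex. -/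
def OutSet (A : V → V → Prop) : Set V := {x | ∀ y, Reach A x y}

/-- `In(D)`: vertices reachable from every other vertex. -/
def InSet (A : V → V → Prop) : Set V := {x | ∀ y, Reach A y x}

/-- Deletion of a single arc. -/
def Del (A : V → V → Prop) (e : V × V) : V → V → Prop :=
  fun a b => A a b ∧ (a, b) ≠ e

/-- The arcs of a path represented as a list of vertices. -/
def pathArcs (p : List V) : List (V × V) := p.zip p.tail

/-- `p` is a directed path from `x` to `y` in the digraph `A`. -/
def IsPathOn (A : V → V → Prop) (x y : V) (p : List V) : Prop :=
  p ≠ [] ∧ p.head? = some x ∧ p.getLast? = some y ∧ p.Nodup ∧ p.Chain' A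

/-- There are arc-disjoint `(x₁,y₁)`- and `(x₂,y₂)`-paths. -/
def ArcDisjointPaths (A : V → V → Prop) (x₁ y₁ x₂ y₂ : V) : Prop :=
  ∃ p q : List V, IsPathOn A x₁ y₁ p ∧ IsPathOn A x₂ y₂ q ∧
    ∀ e ∈ pathArcs p, e ∉ pathArcs q

/-- `B` is (the arc set of) an out-branching of `A` rooted at `u`. -/
def IsOutBranching (A : V → V → Prop) (u : V) (B : Set (V × V)) : Prop :=
  (∀ e ∈ B, A e.1 e.2) ∧ (∀ w, (w, u) ∉ B) ∧
  (∀ v : V, v ≠ u → ∃! w, (w, v) ∈ B) ∧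
  (∀ v : V, Relation.ReflTransGen (fun a b => (a, b) ∈ B) u v)

/-- `B` is (the arc set of) an in-branching of `A` rooted at `v`. -/
def IsInBranching (A : V → V → Prop) (v : V) (B : Set (V × V)) : Prop :=
  (∀ e ∈ B, A e.1 e.2) ∧ (∀ w, (v, w) ∉ B) ∧
  (∀ x : V, x ≠ v → ∃! w, (x, w) ∈ B) ∧
  (∀ x : V, Relation.ReflTransGen (fun a b => (a, b) ∈ B) x v)

/-- A good `(u,v)`-pair: an out-branching rooted at `u` arc-disjoint from an
in-branching rooted at `v`. -/
def GoodPair (A : V → V → Prop) (u v : V) : Prop :=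
  ∃ Bp Bm : Set (V × V), IsOutBranching A u Bp ∧ IsInBranching A v Bm ∧ Disjoint Bp Bm

/-- Out-branching in a directed multigraph given by arc type `E` with tail and
head maps. -/
def IsOutBranchingM {E : Type*} (tl hd : E → V) (s : V) (B : Set E) : Prop :=
  (∀ e ∈ B, hd e ≠ s) ∧
  (∀ v : V, v ≠ s → ∃! e, e ∈ B ∧ hd e = v) ∧
  (∀ v : V, Relation.ReflTransGen (fun a b => ∃ e ∈ B, tl e = a ∧ hd e = b) s v)

open Function Relation Set

lemma Relation.ReflTransGen.exists_rel_notMem_mem {α : Type*} {r : α → α → Prop} {X : Set α}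
    {a b : α} (h : ReflTransGen r a b) (ha : a ∉ X) (hb : b ∈ X) :
    ∃ x ∉ X, ∃ y ∈ X, r x y := by
  induction h with
  | refl => exact absurd hb ha
  | @tail c d _ hcd ih =>
    by_cases hc : c ∈ X
    · exact ih hc
    · exact ⟨c, hc, d, hb, hcd⟩

lemma pairwise_disjoint_fin_cons {α : Type*} [PartialOrder α] [OrderBot α] {k : ℕ} {B : α}
    {F : Fin k → α} (hF : Pairwise (Disjoint on F)) (hB : ∀ i, Disjoint B (F i)) :
    Pairwise (Disjoint on (Fin.cons B F : Fin (k + 1) → α)) := by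
  intro i j hij
  induction i using Fin.cases <;> induction j using Fin.cases
  · exact absurd rfl hij
  · exact hB _
  · exact (hB _).symm
  · exact hF fun h => hij (congrArg Fin.succ h)

lemma card_le_ncard_of_pairwise_disjoint {ι α : Type*} {T : Set α} (hT : T.Finite)
    {F : ι → Set α} (hF : Pairwise (Disjoint on F)) (hFT : ∀ i, (F i ∩ T).Nonempty) :
    Nat.card ι ≤ T.ncard := by
  choose f hfF hfT using hFT
  have hf : Function.Injective f := fun i j hij => by
    by_contra hne
    exact disjoint_left.mp (hF hne) (hfF i) (hij ▸ hfF j)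
  have := hT.to_subtype
  rw [← Nat.card_coe_set_eq]
  exact Nat.card_le_card_of_injective (fun i => ⟨f i, hfT i⟩)
    fun i j h => hf (congrArg Subtype.val h)

section Branchings

variable {E : Type*} (tl hd : E → V)

def inArcs (X : Set V) : Set E := {e | tl e ∉ X ∧ hd e ∈ X}

noncomputable def inDeg (A : Set E) (X : Set V) : ℕ := (A ∩ inArcs tl hd X).ncard

def IsRootedArcConnected (s : V) (k : ℕ) (A : Set E) : Prop :=
  ∀ X : Set V, X.Nonempty → s ∉ X → k ≤ inDeg tl hd A X

def Joins (F : Set E) (a b : V) : Prop := ∃ e ∈ F, tl e = a ∧ hd e = b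

def vertexSet (s : V) (F : Set E) : Set V := insert s (hd '' F)

structure IsPartialOutBranching (s : V) (F : Set E) : Prop where
  hd_ne_root : ∀ e ∈ F, hd e ≠ s
  injOn_hd : InjOn hd F
  reach : ∀ v ∈ vertexSet hd s F, ReflTransGen (Joins tl hd F) s v

@[simp]
lemma inDeg_univ (A : Set E) : inDeg tl hd A univ = 0 := by
  simp [inDeg, inArcs]

lemma inDeg_union_add_inDeg_inter_le [Finite E] (A : Set E) (X Y : Set V) :
    inDeg tl hd A (X ∪ Y) + inDeg tl hd A (X ∩ Y) ≤ inDeg tl hd A X + inDeg tl hd A Y := by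
  set P := A ∩ inArcs tl hd X
  set Q := A ∩ inArcs tl hd Y
  set P' := A ∩ inArcs tl hd (X ∪ Y)
  set Q' := A ∩ inArcs tl hd (X ∩ Y)
  have hunion : P' ∪ Q' ⊆ P ∪ Q := by
    intro e
    simp only [P, Q, P', Q', inArcs, mem_union, mem_inter_iff, mem_ofPred_eq]
    tauto
  have hinter : P' ∩ Q' ⊆ P ∩ Q := by
    intro e
    simp only [P, Q, P', Q', inArcs, mem_union, mem_inter_iff, mem_ofPred_eq]
    tauto
  calc P'.ncard + Q'.ncard = (P' ∪ Q').ncard + (P' ∩ Q').ncard :=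
        (ncard_union_add_ncard_inter _ _).symm
    _ ≤ (P ∪ Q).ncard + (P ∩ Q).ncard :=
        add_le_add (ncard_le_ncard hunion) (ncard_le_ncard hinter)
    _ = P.ncard + Q.ncard := ncard_union_add_ncard_inter _ _

variable {tl hd}

lemma exists_arc_of_inDeg_lt [Finite E] {A : Set E} {Y Z : Set V} (hYZ : Y ⊆ Z)
    (h : inDeg tl hd A Z < inDeg tl hd A Y) : ∃ e ∈ A, tl e ∈ Z \ Y ∧ hd e ∈ Y := by
  by_contra! hno
  refine h.not_ge (ncard_le_ncard ?_)
  rintro e ⟨he, ht, hh⟩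
  exact ⟨he, fun htZ => hno e he ⟨htZ, ht⟩ hh, hYZ hh⟩

lemma inDeg_sdiff_of_forall_hd_notMem {A F : Set E} {Y : Set V} (hF : ∀ e ∈ F, hd e ∉ Y) :
    inDeg tl hd (A \ F) Y = inDeg tl hd A Y := by
  unfold inDeg
  congr 1
  ext e
  simp only [mem_inter_iff, mem_sdiff, inArcs, mem_ofPred_eq]
  exact ⟨fun h => ⟨h.1.1, h.2⟩, fun h => ⟨⟨h.1, fun heF => hF e heF h.2.2⟩, h.2⟩⟩

lemma IsRootedArcConnected.sdiff_singleton [Finite E] {s : V} {k : ℕ} {A : Set E} {a : E}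
    (hA : IsRootedArcConnected tl hd s k A)
    (ha : ∀ X, s ∉ X → a ∈ inArcs tl hd X → k + 1 ≤ inDeg tl hd A X) :
    IsRootedArcConnected tl hd s k (A \ {a}) := by
  intro X hX hsX
  have hcomm : (A \ {a}) ∩ inArcs tl hd X = (A ∩ inArcs tl hd X) \ {a} :=
    inter_sdiff_right_comm.symm
  unfold inDeg
  rw [hcomm]
  by_cases haX : a ∈ A ∩ inArcs tl hd X
  · rw [ncard_sdiff_singleton_of_mem haX]
    have := ha X hsX haX.2
    unfold inDeg at this
    omega
  · rw [sdiff_singleton_eq_self haX]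
    exact hA X hX hsX

lemma exists_safe_arc [Finite V] [Finite E] {s : V} {k : ℕ} {D : Set E} {S : Set V}
    (hW : Sᶜ.Nonempty) (hout : ∀ Y ⊆ Sᶜ, Y.Nonempty → k + 1 ≤ inDeg tl hd D Y)
    (hD : IsRootedArcConnected tl hd s k D) :
    ∃ a ∈ D, tl a ∈ S ∧ hd a ∉ S ∧
      ∀ X, s ∉ X → a ∈ inArcs tl hd X → k + 1 ≤ inDeg tl hd D X := by
  set Deficient : Set V → Prop := fun Z => s ∉ Z ∧ (Z \ S).Nonempty ∧ inDeg tl hd D Z ≤ k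
  by_cases hdef : ∃ Z, Deficient Z
  · obtain ⟨Z₀, hZ₀⟩ := hdef
    obtain ⟨Z, -, hZmin⟩ := Finite.exists_le_minimal hZ₀
    obtain ⟨hsZ, hZS, hZk⟩ := hZmin.prop
    obtain ⟨a, haD, ⟨htZ, htZS⟩, hhZ, hhS⟩ := exists_arc_of_inDeg_lt sdiff_subset
      (hZk.trans_lt (hout _ (fun _ hx => hx.2) hZS))
    refine ⟨a, haD, not_not.mp fun htS => htZS ⟨htZ, htS⟩, hhS, ?_⟩
    rintro X hsX ⟨htX, hhX⟩
    by_contra! hXk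
    have hXZ := hD (X ∪ Z) ⟨hd a, .inl hhX⟩ (by simp [hsX, hsZ])
    have hsub := inDeg_union_add_inDeg_inter_le tl hd D X Z
    have hdefXZ : Deficient (X ∩ Z) :=
      ⟨fun h => hsX h.1, ⟨hd a, ⟨hhX, hhZ⟩, hhS⟩, by omega⟩
    exact htX (hZmin.le_of_le hdefXZ inter_subset_right htZ).1
  · obtain ⟨a, haD, ⟨-, htS⟩, hhS⟩ := exists_arc_of_inDeg_lt (subset_univ Sᶜ)
      ((inDeg_univ tl hd D).trans_lt (k.succ_pos.trans_le (hout _ subset_rfl hW)))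
    refine ⟨a, haD, not_not.mp htS, hhS, ?_⟩
    rintro X hsX ⟨-, hhX⟩
    by_contra! hXk
    exact hdef ⟨X, hsX, ⟨hd a, hhX, hhS⟩, by omega⟩

lemma isPartialOutBranching_empty (s : V) : IsPartialOutBranching tl hd s ∅ where
  hd_ne_root := by simp
  injOn_hd := injOn_empty hd
  reach := by simpa [vertexSet] using ReflTransGen.refl

lemma vertexSet_insert (s : V) (F : Set E) (a : E) :
    vertexSet hd s (insert a F) = insert (hd a) (vertexSet hd s F) := by
  simp only [vertexSet, image_insert_eq, insert_comm]

lemma IsPartialOutBranching.extend {s : V} {F : Set E} {a : E}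
    (hF : IsPartialOutBranching tl hd s F)
    (ht : tl a ∈ vertexSet hd s F) (hh : hd a ∉ vertexSet hd s F) :
    IsPartialOutBranching tl hd s (insert a F) where
  hd_ne_root := by
    rintro e (rfl | he)
    · exact fun h => hh (by rw [h]; exact mem_insert s _)
    · exact hF.hd_ne_root e he
  injOn_hd := by
    have haF : a ∉ F := fun ha => hh (mem_insert_of_mem _ (mem_image_of_mem hd ha))
    exact (injOn_insert haF).2 ⟨hF.injOn_hd, fun h => hh (mem_insert_of_mem _ h)⟩
  reach := by
    have hmono : ReflTransGen (Joins tl hd F) ≤ ReflTransGen (Joins tl hd (insert a F)) :=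
      ReflTransGen.mono fun x y ⟨e, he, hx, hy⟩ => ⟨e, mem_insert_of_mem _ he, hx, hy⟩
    rw [vertexSet_insert]
    rintro v (rfl | hv)
    · exact (hmono _ _ (hF.reach _ ht)).tail ⟨a, mem_insert _ _, rfl, rfl⟩
    · exact hmono _ _ (hF.reach v hv)

lemma IsPartialOutBranching.isOutBranchingM {s : V} {F : Set E}
    (hF : IsPartialOutBranching tl hd s F) (huniv : vertexSet hd s F = univ) :
    IsOutBranchingM tl hd s F := by
  refine ⟨hF.hd_ne_root, fun v hv => ?_, fun v => hF.reach v (huniv ▸ mem_univ v)⟩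
  obtain rfl | ⟨e, he, rfl⟩ := huniv ▸ mem_univ v
  · exact absurd rfl hv
  · exact ⟨e, ⟨he, rfl⟩, fun f hf => hF.injOn_hd hf.1 he hf.2⟩

lemma IsRootedArcConnected.exists_outBranching [Finite V] [Finite E] {s : V} {k : ℕ} {A : Set E}
    (hA : IsRootedArcConnected tl hd s (k + 1) A) :
    ∃ B ⊆ A, IsOutBranchingM tl hd s B ∧ IsRootedArcConnected tl hd s k (A \ B) := by
  set Good : Set E → Prop := fun F =>
    F ⊆ A ∧ IsPartialOutBranching tl hd s F ∧ IsRootedArcConnected tl hd s k (A \ F)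
  have hgood₀ : Good ∅ := ⟨empty_subset A, isPartialOutBranching_empty s,
    fun X hX hsX => by simpa using (hA X hX hsX).trans' k.le_succ⟩
  obtain ⟨F, -, hFmax⟩ := Finite.exists_le_maximal hgood₀
  obtain ⟨hFA, hF, hAF⟩ := hFmax.prop
  suffices huniv : vertexSet hd s F = univ from ⟨F, hFA, hF.isOutBranchingM huniv, hAF⟩
  have hout : ∀ Y ⊆ (vertexSet hd s F)ᶜ, Y.Nonempty → k + 1 ≤ inDeg tl hd (A \ F) Y := by
    intro Y hY hYne
    rw [inDeg_sdiff_of_forall_hd_notMem fun e he heY =>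
      hY heY (mem_insert_of_mem _ (mem_image_of_mem hd he))]
    exact hA Y hYne fun hsY => hY hsY (mem_insert s _)
  by_contra hne
  obtain ⟨a, haAF, ht, hh, hsafe⟩ := exists_safe_arc (nonempty_compl.2 hne) hout hAF
  have hgood : Good (insert a F) := ⟨insert_subset haAF.1 hFA, hF.extend ht hh, by
    rw [insert_eq, union_comm, ← sdiff_sdiff]
    exact hAF.sdiff_singleton hsafe⟩
  exact haAF.2 (hFmax.le_of_ge hgood (subset_insert a F) (mem_insert a F))

lemma IsRootedArcConnected.exists_pairwise_disjoint_outBranchings [Finite V] [Finite E]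
    {s : V} : ∀ {k : ℕ} {A : Set E}, IsRootedArcConnected tl hd s k A →
      ∃ F : Fin k → Set E, (∀ i, F i ⊆ A ∧ IsOutBranchingM tl hd s (F i)) ∧
        Pairwise (Disjoint on F)
  | 0, _, _ => ⟨Fin.elim0, fun i => i.elim0, fun i => i.elim0⟩
  | _ + 1, _, hA => by
    obtain ⟨B, hBA, hB, hAB⟩ := hA.exists_outBranching
    obtain ⟨F, hF, hdisj⟩ := hAB.exists_pairwise_disjoint_outBranchings
    refine ⟨Fin.cons B F,
      Fin.cases ⟨hBA, hB⟩ fun i => ⟨(hF i).1.trans sdiff_subset, (hF i).2⟩,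
      pairwise_disjoint_fin_cons hdisj fun i => disjoint_sdiff_right.mono_right (hF i).1⟩

lemma IsOutBranchingM.inter_inArcs_nonempty {s : V} {B : Set E} {X : Set V}
    (hB : IsOutBranchingM tl hd s B) (hX : X.Nonempty) (hsX : s ∉ X) :
    (B ∩ inArcs tl hd X).Nonempty := by
  obtain ⟨v, hv⟩ := hX
  obtain ⟨x, hx, y, hy, e, he, rfl, rfl⟩ := (hB.2.2 v).exists_rel_notMem_mem hsX hv
  exact ⟨e, he, hx, hy⟩

end Branchings

/-- Edmonds' Branching Theorem. -/
theorem stmt0 {V E : Type*} [Fintype V] [Fintype E]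
    (tl hd : E → V) (s : V) (k : ℕ) :
    (∃ F : Fin k → Set E, (∀ i, IsOutBranchingM tl hd s (F i)) ∧
      Pairwise (fun i j => Disjoint (F i) (F j))) ↔
    ∀ X : Set V, X.Nonempty → s ∉ X → k ≤ {e : E | tl e ∉ X ∧ hd e ∈ X}.ncard := by
  constructor
  · rintro ⟨F, hF, hdisj⟩ X hX hsX
    simpa [inArcs] using card_le_ncard_of_pairwise_disjoint (toFinite _) hdisj
      fun i => (hF i).inter_inArcs_nonempty hX hsX
  · intro h
    have hA : IsRootedArcConnected tl hd s k univ := by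
      simpa [IsRootedArcConnected, inDeg, inArcs] using h
    obtain ⟨F, hF, hdisj⟩ := hA.exists_pairwise_disjoint_outBranchings
    exact ⟨F, fun i => (hF i).2, hdisj⟩
end

section
/- Every strongly connected semicomplete digraph on at least 2 vertices has a Hamiltonian cycle. -/
variable {V : Type*}

/-!
A cycle `C` that misses some vertex can always be lengthened. If a vertex `u` off `C` has arcs
`x → u → y` for consecutive vertices `x, y` of `C`, insert it. Otherwise semicompleteness forces
every vertex off `C` either to dominate all of `C` or to be dominated by all of `C`, with no arcs
back: once `u → y`, walking backwards along `C` shows `u` dominates every predecessor. Strong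
connectivity then yields an arc `z → w` from a vertex dominated by `C` to one dominating it, and
`C` is extended by `z, w`. The first cycle is an arc `x → y` closed by a simple path from `y`
to `x`.
-/

theorem List.exists_nodup_isChain_of_reflTransGen {α : Type*} {r : α → α → Prop} {a b : α}
    (h : Relation.ReflTransGen r a b) :
    ∃ l : List α, l.head? = some a ∧ l.getLast? = some b ∧ l.Nodup ∧ l.IsChain r := by
  induction h using Relation.ReflTransGen.head_induction_on with
  | refl => exact ⟨[b], rfl, rfl, List.nodup_singleton b, .singleton b⟩
  | @head a c hac _ ih =>
    obtain ⟨l, hhead, hlast, hnodup, hchain⟩ := ih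
    by_cases ha : a ∈ l
    · obtain ⟨l₁, l₂, rfl⟩ := List.append_of_mem ha
      refine ⟨a :: l₂, rfl, ?_, hnodup.sublist (List.sublist_append_right _ _),
        hchain.suffix (List.suffix_append _ _)⟩
      simpa [List.getLast?_append] using hlast
    · obtain ⟨l', rfl⟩ := List.head?_eq_some_iff.1 hhead
      exact ⟨a :: c :: l', rfl, by simpa using hlast, List.nodup_cons.2 ⟨ha, hnodup⟩,
        hchain.cons_cons hac⟩

theorem List.exists_isRotated_concat {α : Type*} {l : List α} {a : α} (h : a ∈ l) :
    ∃ l', l ~r l' ++ [a] := by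
  obtain ⟨l₁, l₂, rfl⟩ := List.append_of_mem h
  exact ⟨l₂ ++ l₁, by simpa using List.isRotated_append (l := l₁ ++ [a]) (l' := l₂)⟩

section Camion

variable {A : V → V → Prop}

structure IsCycle (A : V → V → Prop) (p : List V) : Prop where
  ne_nil : p ≠ []
  nodup : p.Nodup
  isChain : p.IsChain A
  closing : ∀ a ∈ p.getLast?, ∀ b ∈ p.head?, A a b

theorem isCycle_append_iff {p q : List V} (hp : p ≠ []) (hq : q ≠ []) :
    IsCycle A (p ++ q) ↔ p.Nodup ∧ q.Nodup ∧ p.Disjoint q ∧ p.IsChain A ∧ q.IsChain A ∧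
      (∀ a ∈ p.getLast?, ∀ b ∈ q.head?, A a b) ∧ (∀ a ∈ q.getLast?, ∀ b ∈ p.head?, A a b) := by
  have hlast := List.getLast?_append_of_ne_nil p hq
  have hhead := List.head?_append_of_ne_nil p (l₂ := q) hp
  constructor
  · rintro ⟨-, hnodup, hchain, hclosing⟩
    rw [List.nodup_append'] at hnodup
    rw [List.isChain_append] at hchain
    rw [hlast, hhead] at hclosing
    exact ⟨hnodup.1, hnodup.2.1, hnodup.2.2, hchain.1, hchain.2.1, hchain.2.2, hclosing⟩
  · rintro ⟨hpn, hqn, hpq, hpc, hqc, hpq', hqp'⟩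
    exact ⟨by simp [hp], List.nodup_append'.2 ⟨hpn, hqn, hpq⟩,
      List.isChain_append.2 ⟨hpc, hqc, hpq'⟩, hlast ▸ hhead ▸ hqp'⟩

theorem IsCycle.append_comm {p q : List V} (h : IsCycle A (p ++ q)) : IsCycle A (q ++ p) := by
  rcases eq_or_ne p [] with rfl | hp
  · simpa using h
  rcases eq_or_ne q [] with rfl | hq
  · simpa using h
  obtain ⟨hpn, hqn, hpq, hpc, hqc, hpq', hqp'⟩ := (isCycle_append_iff hp hq).1 h
  exact (isCycle_append_iff hq hp).2 ⟨hqn, hpn, hpq.symm, hqc, hpc, hqp', hpq'⟩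

theorem IsCycle.isRotated {p q : List V} (h : IsCycle A p) (hpq : p ~r q) : IsCycle A q := by
  obtain ⟨n, rfl⟩ := hpq
  rw [List.rotate_eq_drop_append_take_mod]
  exact (List.take_append_drop _ p ▸ h).append_comm

/-- `u` fits between two cyclically consecutive vertices of `p`, i.e. between the last and the
first vertex of some rotation of `p`. -/
def CanInsert (A : V → V → Prop) (p : List V) (u : V) : Prop :=
  ∃ r, p ~r r ∧ (∀ a ∈ r.getLast?, A a u) ∧ ∀ b ∈ r.head?, A u b

theorem IsCycle.exists_length_eq_succ {p : List V} {u : V} (hp : IsCycle A p) (hu : u ∉ p)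
    (hins : CanInsert A p u) : ∃ q, IsCycle A q ∧ q.length = p.length + 1 := by
  obtain ⟨r, hpr, hau, hub⟩ := hins
  have hr := hp.isRotated hpr
  refine ⟨r ++ [u], (isCycle_append_iff hr.ne_nil (List.cons_ne_nil _ _)).2
    ⟨hr.nodup, List.nodup_singleton u, List.disjoint_singleton.2 (mt hpr.mem_iff.2 hu),
      hr.isChain, .singleton u, fun a ha _ hb => Option.some.inj hb ▸ hau a ha,
      fun _ ha b hb => Option.some.inj ha ▸ hub b hb⟩, ?_⟩
  simp [hpr.perm.length_eq]

theorem isChain_of_not_canInsert (hsc : Semicomplete A) {p r : List V} {u : V} (hu : u ∉ p)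
    (hins : ¬CanInsert A p u) (hpr : p ~r r) : r.IsChain (fun s t => A u t → A u s) := by
  refine List.isChain_iff_forall_rel_of_append_cons_cons.2 fun s t l₁ l₂ hr hut => ?_
  have hs : s ∈ p := hpr.mem_iff.2 (by simp [hr])
  refine (hsc u s (ne_of_mem_of_not_mem hs hu).symm).resolve_right fun hsu => hins ?_
  refine ⟨(t :: l₂ ++ l₁) ++ [s], hpr.trans ?_,
    fun a ha => Option.some.inj (List.getLast?_concat ▸ ha) ▸ hsu,
    fun b hb => Option.some.inj hb ▸ hut⟩
  simpa [hr] using List.isRotated_append (l := l₁ ++ [s]) (l' := t :: l₂)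

def StrictlyDominates (A : V → V → Prop) (u : V) (p : List V) : Prop :=
  ∀ z ∈ p, A u z ∧ ¬A z u

theorem StrictlyDominates.not_mem {p : List V} {u : V} (h : StrictlyDominates A u p) : u ∉ p :=
  fun hu => (h u hu).2 (h u hu).1

theorem strictlyDominates_or_of_not_canInsert (hsc : Semicomplete A) {p : List V} {u : V}
    (hu : u ∉ p) (hins : ¬CanInsert A p u) :
    StrictlyDominates A u p ∨ StrictlyDominates (flip A) u p := by
  by_cases hout : ∃ y ∈ p, A u y
  · obtain ⟨y, hy, huy⟩ := hout
    have hall : ∀ z ∈ p, A u z := by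
      obtain ⟨l, hl⟩ := List.exists_isRotated_concat hy
      intro z hz
      exact (isChain_of_not_canInsert hsc hu hins hl).backwards_induction (A u ·) _
        (fun _ _ h => h) (fun _ => by simpa using huy) z (hl.mem_iff.1 hz)
    refine Or.inl fun z hz => ⟨hall z hz, fun hzu => hins ?_⟩
    obtain ⟨l, hl⟩ := List.exists_isRotated_concat hz
    exact ⟨l ++ [z], hl, by simpa using hzu,
      fun b hb => hall b (hl.mem_iff.2 (List.mem_of_mem_head? hb))⟩
  · push Not at hout
    exact Or.inr fun z hz =>
      ⟨(hsc z u (ne_of_mem_of_not_mem hz hu)).resolve_right (hout z hz), hout z hz⟩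

theorem Reach.mem_of_closed {T : Set V} (hT : ∀ x y, x ∈ T → A x y → y ∈ T) {x y : V}
    (h : Reach A x y) (hx : x ∈ T) : y ∈ T := by
  induction h with
  | refl => exact hx
  | tail _ hyz ih => exact hT _ _ ih hyz

theorem Strong.exists_arc_of_strictlyDominates_or (hstrong : Strong A) {p : List V} {v : V}
    (hp : p ≠ []) (hv : v ∉ p)
    (hsplit : ∀ u ∉ p, StrictlyDominates A u p ∨ StrictlyDominates (flip A) u p) :
    ∃ z w, StrictlyDominates (flip A) z p ∧ StrictlyDominates A w p ∧ A z w := by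
  by_contra! hno
  obtain ⟨h, hh⟩ := List.exists_mem_of_ne_nil p hp
  rcases hsplit v hv with hvout | hvin
  · refine (hstrong h v).mem_of_closed (T := {x | ¬StrictlyDominates A x p}) ?_
      (fun hhout => hhout.not_mem hh) hvout
    intro x y hx hxy hyout
    by_cases hxp : x ∈ p
    · exact (hyout x hxp).2 hxy
    · exact hno x y ((hsplit x hxp).resolve_left hx) hyout hxy
  · refine ((hstrong v h).mem_of_closed (T := {x | StrictlyDominates (flip A) x p}) ?_
      hvin).not_mem hh
    intro x y hxin hxy
    by_cases hyp : y ∈ p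
    · exact absurd hxy (hxin y hyp).2
    · exact (hsplit y hyp).resolve_left fun hyout => hno x y hxin hyout hxy

theorem IsCycle.exists_length_gt (hsc : Semicomplete A) (hstrong : Strong A) {p : List V} {v : V}
    (hp : IsCycle A p) (hv : v ∉ p) : ∃ q, IsCycle A q ∧ p.length < q.length := by
  by_cases hins : ∃ u ∉ p, CanInsert A p u
  · obtain ⟨u, hu, hins⟩ := hins
    obtain ⟨q, hq, hlen⟩ := hp.exists_length_eq_succ hu hins
    exact ⟨q, hq, by omega⟩
  push Not at hins
  obtain ⟨z, w, hz, hw, hzw⟩ := hstrong.exists_arc_of_strictlyDominates_or hp.ne_nil hv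
    fun u hu => strictlyDominates_or_of_not_canInsert hsc hu (hins u hu)
  obtain ⟨h, hh⟩ := List.exists_mem_of_ne_nil p hp.ne_nil
  have hzw_ne : z ≠ w := fun hzw_eq => (hw h hh).2 (hzw_eq ▸ (hz h hh).1)
  refine ⟨p ++ [z, w], (isCycle_append_iff hp.ne_nil (List.cons_ne_nil _ _)).2
    ⟨hp.nodup, by simp [hzw_ne], ?_, hp.isChain, List.isChain_pair.2 hzw,
      fun a ha _ hb => Option.some.inj hb ▸ (hz a (List.mem_of_mem_getLast? ha)).1,
      fun _ ha b hb => Option.some.inj ha ▸ (hw b (List.mem_of_mem_head? hb)).1⟩, by simp⟩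
  simpa [List.disjoint_cons_right] using ⟨hz.not_mem, hw.not_mem⟩

theorem IsCycle.exists_forall_mem [Fintype V] (hsc : Semicomplete A) (hstrong : Strong A)
    {p : List V} (hp : IsCycle A p) : ∃ q, IsCycle A q ∧ ∀ v, v ∈ q := by
  by_cases hall : ∀ v, v ∈ p
  · exact ⟨p, hp, hall⟩
  push Not at hall
  obtain ⟨v, hv⟩ := hall
  obtain ⟨q, hq, hlen⟩ := hp.exists_length_gt hsc hstrong hv
  have hcard := hq.nodup.length_le_card
  exact hq.exists_forall_mem hsc hstrong
termination_by Fintype.card V - p.length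

theorem exists_isCycle (hsc : Semicomplete A) (hstrong : Strong A) {x y : V} (hxy : x ≠ y) :
    ∃ p, IsCycle A p := by
  wlog hxy' : A x y generalizing x y
  · exact this hxy.symm ((hsc x y hxy).resolve_left hxy')
  obtain ⟨p, hhead, hlast, hnodup, hchain⟩ :=
    List.exists_nodup_isChain_of_reflTransGen (hstrong y x)
  refine ⟨p, fun hp => by simp [hp] at hhead, hnodup, hchain, fun a ha b hb => ?_⟩
  rw [Option.mem_unique ha hlast, Option.mem_unique hb hhead]
  exact hxy'

end Camion

theorem stmt2_general [Fintype V] (A : V → V → Prop) (hsc : Semicomplete A)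
    (hstrong : Strong A) (h2 : 2 ≤ Fintype.card V) :
    ∃ p : List V, p.Nodup ∧ (∀ v : V, v ∈ p) ∧ p.Chain' A ∧
      ∀ a b : V, p.getLast? = some a → p.head? = some b → A a b := by
  obtain ⟨x, y, hxy⟩ := Fintype.exists_pair_of_one_lt_card (α := V) h2
  obtain ⟨p, hp⟩ := exists_isCycle hsc hstrong hxy
  obtain ⟨q, hq, hall⟩ := hp.exists_forall_mem hsc hstrong
  exact ⟨q, hq.nodup, hall, hq.isChain, fun a b ha hb => hq.closing a ha b hb⟩

/-- Camion's theorem for semicomplete digraphs: every strong semicomplete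
digraph on at least 2 vertices has a Hamiltonian cycle. -/
theorem stmt2 [Fintype V] (A : V → V → Prop) (hsc : Semicomplete A)
    (hirr : Irreflexive A) (hstrong : Strong A) (h2 : 2 ≤ Fintype.card V) :
    ∃ p : List V, p.Nodup ∧ (∀ v : V, v ∈ p) ∧ p.Chain' A ∧
      ∀ a b : V, p.getLast? = some a → p.head? = some b → A a b :=
  stmt2_general A hsc hstrong h2
end

section
/- Every strongly connected semicomplete digraph D has a Hamiltonian directed path starting at any prescribed vertex x. -/
variable {V : Type*}

/-!
If `x` reaches every vertex of a finite vertex set `S` inside `S`, then the induced subdigraph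
on `S` has a Hamiltonian path starting at `x`. Induct on `|S|`: in a semicomplete digraph some
vertex `w` of `S \ {x}` reaches all of `S \ {x}` inside it. Let `u` be the vertex following the
last visit to `x` on a walk from `x` to `w` in `S`; then `u` reaches `w`, hence all of `S \ {x}`,
avoiding `x`, and `x` followed by a Hamiltonian path of `S \ {x}` from `u` is the required path.
-/

open Relation

section

variable {A : V → V → Prop}

lemma ReachOn.mono {S T : Set V} (hST : S ⊆ T) {a b : V} (h : ReachOn A S a b) :
    ReachOn A T a b :=
  ReflTransGen.mono (fun _ _ hab => ⟨hST hab.1, hST hab.2.1, hab.2.2⟩) _ _ h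

lemma Reach.reachOn_univ {a b : V} (h : Reach A a b) : ReachOn A Set.univ a b :=
  ReflTransGen.mono (fun _ _ hab => ⟨trivial, trivial, hab⟩) _ _ h

lemma Semicomplete.exists_reachOn_forall (hsc : Semicomplete A) {S : Finset V}
    (hS : S.Nonempty) : ∃ w ∈ S, ∀ t ∈ S, ReachOn A S w t := by
  classical
  induction S using Finset.induction_on with
  | empty => simp at hS
  | @insert v S hv ih =>
    rcases S.eq_empty_or_nonempty with rfl | hSne
    · refine ⟨v, Finset.mem_insert_self v ∅, fun t ht => ?_⟩
      rw [Finset.mem_singleton.mp ht]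
      exact ReflTransGen.refl
    obtain ⟨w, hwS, hw⟩ := ih hSne
    have hsub : (S : Set V) ⊆ ↑(insert v S) := by simp
    have hwv : w ≠ v := fun h => hv (h ▸ hwS)
    rcases hsc w v hwv with hAwv | hAvw
    · refine ⟨w, Finset.mem_insert_of_mem hwS, fun t ht => ?_⟩
      rcases Finset.mem_insert.mp ht with rfl | ht
      · exact ReflTransGen.single ⟨by simp [hwS], by simp, hAwv⟩
      · exact (hw t ht).mono hsub
    · refine ⟨v, Finset.mem_insert_self v S, fun t ht => ?_⟩
      rcases Finset.mem_insert.mp ht with rfl | ht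
      · exact ReflTransGen.refl
      · exact (ReflTransGen.single ⟨by simp, by simp [hwS], hAvw⟩).trans ((hw t ht).mono hsub)

lemma Relation.ReflTransGen.exists_step_then_avoid {R : V → V → Prop} {x y : V}
    (h : ReflTransGen R x y) (hy : y ≠ x) :
    ∃ u, u ≠ x ∧ R x u ∧ ReflTransGen (fun a b => R a b ∧ a ≠ x ∧ b ≠ x) u y := by
  induction h with
  | refl => exact absurd rfl hy
  | @tail b c _ hbc ih =>
    by_cases hb : b = x
    · subst hb
      exact ⟨c, hy, hbc, ReflTransGen.refl⟩
    · obtain ⟨u, hux, hxu, hu⟩ := ih hb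
      exact ⟨u, hux, hxu, hu.tail ⟨hbc, hb, hy⟩⟩

lemma isPathOn_singleton (x : V) : IsPathOn A x x [x] :=
  ⟨List.cons_ne_nil x [], rfl, rfl, List.nodup_singleton x, List.isChain_singleton x⟩

lemma IsPathOn.cons {x u y : V} {p : List V} (hp : IsPathOn A u y p) (hxu : A x u)
    (hx : x ∉ p) : IsPathOn A x y (x :: p) := by
  obtain ⟨hne, hhead, hlast, hnd, hch⟩ := hp
  obtain ⟨a, p, rfl⟩ := List.exists_cons_of_ne_nil hne
  obtain rfl : a = u := Option.some.inj hhead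
  refine ⟨List.cons_ne_nil x _, rfl, ?_, List.nodup_cons.mpr ⟨hx, hnd⟩,
    List.isChain_cons_cons.mpr ⟨hxu, hch⟩⟩
  rwa [List.getLast?_cons_cons]

lemma Semicomplete.exists_isPathOn_of_reachOn (hsc : Semicomplete A) (S : Finset V) {x : V}
    (hx : x ∈ S) (hreach : ∀ y ∈ S, ReachOn A S x y) :
    ∃ y p, IsPathOn A x y p ∧ ∀ v, v ∈ p ↔ v ∈ S := by
  classical
  induction S using Finset.strongInduction generalizing x with
  | H S ih =>
    set T := S.erase x
    rcases T.eq_empty_or_nonempty with hT | hT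
    · refine ⟨x, [x], isPathOn_singleton x, fun v => ?_⟩
      rw [List.mem_singleton]
      refine ⟨fun hv => hv ▸ hx, fun hv => by_contra fun hvx => ?_⟩
      have hvT : v ∈ T := Finset.mem_erase.mpr ⟨hvx, hv⟩
      simp [hT] at hvT
    obtain ⟨w, hwT, hw⟩ := hsc.exists_reachOn_forall hT
    obtain ⟨hwx, hwS⟩ := Finset.mem_erase.mp hwT
    obtain ⟨u, hux, ⟨-, huS, hxu⟩, huw⟩ := (hreach w hwS).exists_step_then_avoid hwx
    have huT : u ∈ T := Finset.mem_erase.mpr ⟨hux, huS⟩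
    have huw : ReachOn A T u w := ReflTransGen.mono
      (fun a b ⟨⟨haS, hbS, hab⟩, hax, hbx⟩ =>
        ⟨Finset.mem_erase.mpr ⟨hax, haS⟩, Finset.mem_erase.mpr ⟨hbx, hbS⟩, hab⟩) _ _ huw
    obtain ⟨y, p, hp, hpT⟩ :=
      ih T (Finset.erase_ssubset hx) huT fun t ht => huw.trans (hw t ht)
    have hxp : x ∉ p := fun hxp => Finset.notMem_erase x S ((hpT x).mp hxp)
    refine ⟨y, x :: p, hp.cons hxu hxp, fun v => ?_⟩
    rw [List.mem_cons, hpT, Finset.mem_erase]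
    by_cases hvx : v = x <;> simp [hvx, hx]

end

theorem stmt3_general [Fintype V] (A : V → V → Prop) (hsc : Semicomplete A)
    (hstrong : Strong A) (x : V) :
    ∃ (y : V) (p : List V), IsPathOn A x y p ∧ ∀ v : V, v ∈ p := by
  obtain ⟨y, p, hp, hpS⟩ := hsc.exists_isPathOn_of_reachOn Finset.univ (Finset.mem_univ x)
    fun y _ => by simpa using (hstrong x y).reachOn_univ
  exact ⟨y, p, hp, fun v => (hpS v).mpr (Finset.mem_univ v)⟩

/-- Every strong semicomplete digraph has a Hamiltonian path starting at any
prescribed vertex `x`. -/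
theorem stmt3 [Fintype V] (A : V → V → Prop) (hsc : Semicomplete A)
    (hirr : Irreflexive A) (hstrong : Strong A) (x : V) :
    ∃ (y : V) (p : List V), IsPathOn A x y p ∧ ∀ v : V, v ∈ p :=
  stmt3_general A hsc hstrong x
end

section
/- If D is a non-strong semicomplete digraph with strong components D_1,...,D_p (p ≥ 2) in the unique acyclic ordering, then D has a Hamiltonian directed path from x to y for every choice of x in D_1 and y in D_p. -/
variable {V : Type*}

/-!
Let `I = In(D)`. No arc leaves `I`, so by semicompleteness every vertex outside `I` dominates
every vertex of `I`. In a semicomplete digraph a path from `x` absorbs any vertex `w` with an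
in-neighbour `a` on it: go along the path from `a` until the first vertex dominated by `w` and
insert `w` just before it, or append `w` if there is none. So if `x` reaches all of a set `S`
inside `S`, a longest path from `x` within `S` spans `S`. This applies to the complement of `I`
starting at `x`, and, reversing all arcs, to `I` ending at `y`; the concatenation of the two
paths is the Hamiltonian `(x,y)`-path.
-/

section Paths

variable {A : V → V → Prop}

lemma List.IsChain.exists_perm_insert_of_arc (hsc : Semicomplete A) {w : V} :
    ∀ {l : List V}, l.IsChain A → w ∉ l → ∀ a ∈ l, A a w →
      ∃ l' : List V, l'.Perm (w :: l) ∧ l'.IsChain A ∧ l'.head? = l.head? := by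
  intro l
  induction l with
  | nil => simp
  | cons b t ih =>
    intro hch hw a ha haw
    have hwb : w ≠ b := fun h => hw (h ▸ List.mem_cons_self)
    have hwt : w ∉ t := fun h => hw (List.mem_cons_of_mem b h)
    have hbt := List.isChain_cons.mp hch
    -- either `w` fits right after `b`, or the arc into `w` moves one step along `t`
    have hcases : (∃ c ∈ t, A c w) ∨ (A b w ∧ ∀ c ∈ t.head?, A w c) := by
      rcases List.mem_cons.mp ha with rfl | hat
      · cases t with
        | nil => exact Or.inr ⟨haw, by simp⟩
        | cons c t' =>
          rcases hsc w c (fun h => hwt (h ▸ List.mem_cons_self)) with hwc | hcw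
          · exact Or.inr ⟨haw, by simpa using hwc⟩
          · exact Or.inl ⟨c, List.mem_cons_self, hcw⟩
      · exact Or.inl ⟨a, hat, haw⟩
    rcases hcases with ⟨c, hct, hcw⟩ | ⟨hbw, hwhead⟩
    · obtain ⟨l', hperm, hch', hhead⟩ := ih hbt.2 hwt c hct hcw
      refine ⟨b :: l', (hperm.cons b).trans (List.Perm.swap w b t), ?_, rfl⟩
      exact List.isChain_cons.mpr ⟨hhead ▸ hbt.1, hch'⟩
    · exact ⟨b :: w :: t, List.Perm.swap w b t, List.isChain_cons_cons.mpr
        ⟨hbw, List.isChain_cons.mpr ⟨hwhead, hbt.2⟩⟩, rfl⟩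

lemma Relation.ReflTransGen.exists_arc_leaving {R : V → V → Prop} {P : V → Prop} {x w : V}
    (h : Relation.ReflTransGen R x w) (hx : P x) (hw : ¬ P w) :
    ∃ a u, P a ∧ ¬ P u ∧ R a u := by
  induction h with
  | refl => exact absurd hx hw
  | @tail c w _ hcw ih =>
    by_cases hc : P c
    · exact ⟨c, w, hc, hw, hcw⟩
    · exact ih hc

lemma reachOn_of_reach_of_mem_left {S : Set V} (hS : ∀ a b, A a b → a ∈ S → b ∈ S)
    {u v : V} (h : Reach A u v) (hu : u ∈ S) : ReachOn A S u v := by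
  revert hu
  induction h using Relation.ReflTransGen.head_induction_on with
  | refl => exact fun _ => Relation.ReflTransGen.refl
  | head hac _ ih => exact fun ha => .head ⟨ha, hS _ _ hac ha, hac⟩ (ih (hS _ _ hac ha))

lemma reachOn_of_reach_of_mem_right {S : Set V} (hS : ∀ a b, A a b → b ∈ S → a ∈ S)
    {u v : V} (h : Reach A u v) (hv : v ∈ S) : ReachOn A S u v := by
  revert hv
  induction h with
  | refl => exact fun _ => Relation.ReflTransGen.refl
  | tail _ hcv ih => exact fun hv => .tail (ih (hS _ _ hcv hv)) ⟨hS _ _ hcv hv, hv, hcv⟩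

lemma exists_longer_path_of_reachOn (hsc : Semicomplete A) {S : Set V} {x : V}
    (hreach : ∀ v ∈ S, ReachOn A S x v) {p : List V} (hx : p.head? = some x)
    (hch : p.IsChain A) (hcov : ¬ ∀ v ∈ S, v ∈ p) :
    ∃ u ∈ S, u ∉ p ∧ ∃ q : List V, q.Perm (u :: p) ∧ q.IsChain A ∧ q.head? = some x := by
  push Not at hcov
  obtain ⟨w, hwS, hwp⟩ := hcov
  obtain ⟨a, u, hap, hup, -, huS, hau⟩ :=
    (hreach w hwS).exists_arc_leaving (P := (· ∈ p)) (List.mem_of_head? hx) hwp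
  obtain ⟨q, hperm, hqch, hqx⟩ := hch.exists_perm_insert_of_arc hsc hup a hap hau
  exact ⟨u, huS, hup, q, hperm, hqch, hqx.trans hx⟩

theorem exists_spanning_path_from_of_path [Fintype V] (hsc : Semicomplete A) {S : Set V}
    {x : V} (hreach : ∀ v ∈ S, ReachOn A S x v) {p : List V} (hx : p.head? = some x)
    (hnd : p.Nodup) (hch : p.IsChain A) (hpS : ∀ v ∈ p, v ∈ S) :
    ∃ q : List V, q.head? = some x ∧ q.Nodup ∧ q.IsChain A ∧ ∀ v, v ∈ q ↔ v ∈ S := by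
  by_cases hcov : ∀ v ∈ S, v ∈ p
  · exact ⟨p, hx, hnd, hch, fun v => ⟨hpS v, hcov v⟩⟩
  obtain ⟨u, huS, hup, q, hperm, hqch, hqx⟩ :=
    exists_longer_path_of_reachOn hsc hreach hx hch hcov
  have hqnd : q.Nodup := hperm.nodup_iff.mpr (List.nodup_cons.mpr ⟨hup, hnd⟩)
  have hlen : q.length = p.length + 1 := by simp [hperm.length_eq]
  have hcard := hqnd.length_le_card
  refine exists_spanning_path_from_of_path hsc hreach hqx hqnd hqch fun v hv => ?_
  rcases List.mem_cons.mp (hperm.mem_iff.mp hv) with rfl | hvp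
  exacts [huS, hpS v hvp]
termination_by Fintype.card V - p.length

theorem exists_spanning_path_from [Fintype V] (hsc : Semicomplete A) {S : Set V} {x : V}
    (hx : x ∈ S) (hreach : ∀ v ∈ S, ReachOn A S x v) :
    ∃ q : List V, q.head? = some x ∧ q.Nodup ∧ q.IsChain A ∧ ∀ v, v ∈ q ↔ v ∈ S :=
  exists_spanning_path_from_of_path hsc hreach rfl (List.nodup_singleton x)
    (List.isChain_singleton x) (by simpa using hx)

theorem exists_spanning_path_to [Fintype V] (hsc : Semicomplete A) {S : Set V} {y : V}
    (hy : y ∈ S) (hreach : ∀ v ∈ S, ReachOn A S v y) :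
    ∃ q : List V, q.getLast? = some y ∧ q.Nodup ∧ q.IsChain A ∧ ∀ v, v ∈ q ↔ v ∈ S := by
  have hreach' : ∀ v ∈ S, ReachOn (flip A) S y v := fun v hv =>
    Relation.reflTransGen_swap.mp <|
      Relation.ReflTransGen.mono (fun _ _ ⟨ha, hb, hab⟩ => ⟨hb, ha, hab⟩) _ _ (hreach v hv)
  obtain ⟨q, hqy, hqnd, hqch, hqS⟩ :=
    exists_spanning_path_from (fun a b hab => (hsc a b hab).symm) hy hreach'
  exact ⟨q.reverse, by rwa [List.getLast?_reverse], List.nodup_reverse.mpr hqnd,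
    List.isChain_reverse.mpr hqch, fun v => by rw [List.mem_reverse, hqS]⟩

lemma isPathOn_append {x y : V} {p q : List V} (hx : p.head? = some x) (hpnd : p.Nodup)
    (hpch : p.IsChain A) (hy : q.getLast? = some y) (hqnd : q.Nodup) (hqch : q.IsChain A)
    (hdisj : ∀ a ∈ p, ∀ b ∈ q, a ≠ b) (hdom : ∀ a ∈ p, ∀ b ∈ q, A a b) :
    IsPathOn A x y (p ++ q) := by
  refine ⟨by simp [List.ne_nil_of_mem (List.mem_of_head? hx)], ?_, ?_,
    List.nodup_append.mpr ⟨hpnd, hqnd, hdisj⟩,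
    List.isChain_append.mpr ⟨hpch, hqch, fun a ha b hb => ?_⟩⟩
  · simp [List.head?_append, hx]
  · simp [List.getLast?_append, hy]
  · exact hdom a (List.mem_of_getLast? ha) b (List.mem_of_head? hb)

end Paths

section InSet

variable {A : V → V → Prop}

lemma mem_inSet_of_arc {a b : V} (ha : a ∈ InSet A) (hab : A a b) : b ∈ InSet A :=
  fun u => (ha u).tail hab

lemma strong_of_mem_outSet_of_mem_inSet {x : V} (hx : x ∈ OutSet A) (hx' : x ∈ InSet A) :
    Strong A :=
  fun u v => (hx' u).trans (hx v)

lemma Semicomplete.arc_of_notMem_inSet_of_mem_inSet (hsc : Semicomplete A) {u v : V}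
    (hu : u ∉ InSet A) (hv : v ∈ InSet A) : A u v :=
  (hsc u v fun h => hu (h ▸ hv)).resolve_right fun hvu => hu (mem_inSet_of_arc hv hvu)

end InSet

theorem stmt4_general [Fintype V] (A : V → V → Prop) (hsc : Semicomplete A)
    (hns : ¬ Strong A)
    (x y : V) (hx : x ∈ OutSet A) (hy : y ∈ InSet A) :
    ∃ p : List V, IsPathOn A x y p ∧ ∀ v : V, v ∈ p := by
  have hxIn : x ∉ InSet A := fun h => hns (strong_of_mem_outSet_of_mem_inSet hx h)
  obtain ⟨p, hpx, hpnd, hpch, hp⟩ := exists_spanning_path_from hsc (S := (InSet A)ᶜ) hxIn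
    fun v hv => reachOn_of_reach_of_mem_right
      (fun _ _ hab hb ha => absurd (mem_inSet_of_arc ha hab) hb) (hx v) hv
  obtain ⟨q, hqy, hqnd, hqch, hq⟩ := exists_spanning_path_to hsc hy
    fun v hv => reachOn_of_reach_of_mem_left (fun _ _ hab ha => mem_inSet_of_arc ha hab) (hy v) hv
  refine ⟨p ++ q, isPathOn_append hpx hpnd hpch hqy hqnd hqch ?_ ?_, fun v => ?_⟩
  · rintro a ha _ hb rfl
    exact (hp a).mp ha ((hq a).mp hb)
  · exact fun a ha b hb => hsc.arc_of_notMem_inSet_of_mem_inSet ((hp a).mp ha) ((hq b).mp hb)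
  · by_cases hv : v ∈ InSet A
    · exact List.mem_append_right p ((hq v).mpr hv)
    · exact List.mem_append_left q ((hp v).mpr hv)

/-- A non-strong semicomplete digraph has an `(x,y)`-Hamiltonian path for every
`x` in the initial strong component (= `Out(D)`) and `y` in the terminal strong
component (= `In(D)`). -/
theorem stmt4 [Fintype V] (A : V → V → Prop) (hsc : Semicomplete A)
    (hirr : Irreflexive A) (hns : ¬ Strong A)
    (x y : V) (hx : x ∈ OutSet A) (hy : y ∈ InSet A) :
    ∃ p : List V, IsPathOn A x y p ∧ ∀ v : V, v ∈ p :=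
  stmt4_general A hsc hns x y hx hy
end

section
/- Let D be a semicomplete digraph with a partition V_1,...,V_{2α+2} of V(D) for some α ≥ 1, with v ∈ V_2, w ∈ V_{2α+1}, u ∈ V_{2α+2}, such that all arcs between V_i and V_j with i < j go from V_i to V_j except that for each i ∈ [2α] there is exactly one arc from V_{i+2} to V_i (going from the terminal strong component of D⟨V_{i+2}⟩ to the initial strong component of D⟨V_i⟩). Then for every vertex z ∈ V_1, D has no pair of arc-disjoint (u,z)- and (w,v)-paths. -/
variable {V : Type*}

/-!
Index the parts by levels `0, …, 2α+1`. The only arcs that go down are the arcs `eₛ` from level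
`s + 2` to level `s`, one for each `s`, so a path that descends past a threshold `t` uses `eₜ` or
`eₜ₋₁`. The `(u,z)`-path has to use `e₀`. If one of the two paths uses `eₜ`, the other one descends
past `t + 1` and may not reuse `eₜ`, so it uses `eₜ₊₁`. Hence `eₜ` lies on the `(u,z)`-path for even
`t` and on the `(w,v)`-path for odd `t`, for all `t ≤ 2α`; but `e_{2α}` would end at level `2α+2`.
-/

theorem rel_of_mem_pathArcs {A : V → V → Prop} :
    ∀ {p : List V}, p.IsChain A → ∀ {a b : V}, (a, b) ∈ pathArcs p → A a b
  | [], _, _, _, h => by simp [pathArcs] at h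
  | [_], _, _, _, h => by simp [pathArcs] at h
  | c :: d :: r, hp, a, b, h => by
    rw [List.isChain_cons_cons] at hp
    change (a, b) ∈ (c, d) :: pathArcs (d :: r) at h
    rcases List.mem_cons.mp h with h | h
    · obtain ⟨rfl, rfl⟩ := Prod.mk.inj h
      exact hp.1
    · exact rel_of_mem_pathArcs hp.2 h

theorem exists_mem_pathArcs_le_lt (f : V → ℕ) {t : ℕ} :
    ∀ {p : List V} {x y : V}, p.head? = some x → p.getLast? = some y → f y ≤ t → t < f x →
      ∃ a b, (a, b) ∈ pathArcs p ∧ f b ≤ t ∧ t < f a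
  | [], _, _, hx, _, _, _ => by simp at hx
  | [c], x, y, hx, hy, hyt, htx => by
    simp only [List.head?_cons, List.getLast?_singleton, Option.some.injEq] at hx hy
    subst hx hy
    omega
  | c :: d :: r, x, y, hx, hy, hyt, htx => by
    simp only [List.head?_cons, Option.some.injEq] at hx
    subst hx
    change ∃ a b, (a, b) ∈ (c, d) :: pathArcs (d :: r) ∧ f b ≤ t ∧ t < f a
    by_cases hd : f d ≤ t
    · exact ⟨c, d, List.mem_cons_self, hd, htx⟩
    · rw [List.getLast?_cons_cons] at hy
      obtain ⟨a, b, hab, hb, ha⟩ := exists_mem_pathArcs_le_lt f rfl hy hyt (by omega)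
      exact ⟨a, b, List.mem_cons_of_mem _ hab, hb, ha⟩

def IsBackArc (A : V → V → Prop) (f : V → ℕ) (s : ℕ) (e : V × V) : Prop :=
  A e.1 e.2 ∧ f e.2 = s ∧ f e.1 = s + 2

section Layered

variable {A : V → V → Prop} {f : V → ℕ}
  (hdown : ∀ a b, A a b → f b < f a → f a = f b + 2)
  (hunique : ∀ s e e', IsBackArc A f s e → IsBackArc A f s e' → e = e')
include hdown

theorem exists_isBackArc_mem_pathArcs {p : List V} {x y : V} (hp : IsPathOn A x y p) {t : ℕ}
    (hyt : f y ≤ t) (htx : t < f x) :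
    ∃ s, (s = t ∨ s + 1 = t) ∧ ∃ e ∈ pathArcs p, IsBackArc A f s e := by
  obtain ⟨-, hx, hy, -, hchain⟩ := hp
  obtain ⟨a, b, hab, hb, ha⟩ := exists_mem_pathArcs_le_lt f hx hy hyt htx
  have hA := rel_of_mem_pathArcs hchain hab
  have hlevel := hdown a b hA (by omega)
  exact ⟨f b, by omega, (a, b), hab, hA, rfl, hlevel⟩

include hunique

theorem exists_isBackArc_succ_mem_pathArcs {p₁ p₂ : List V}
    (hdisj : (pathArcs p₁).Disjoint (pathArcs p₂)) {t : ℕ} {e : V × V}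
    (he : e ∈ pathArcs p₁) (hback : IsBackArc A f t e) {x y : V} (hp₂ : IsPathOn A x y p₂)
    (hyt : f y ≤ t + 1) (htx : t + 1 < f x) :
    ∃ e' ∈ pathArcs p₂, IsBackArc A f (t + 1) e' := by
  obtain ⟨s, hs, e', he', hback'⟩ := exists_isBackArc_mem_pathArcs hdown hp₂ hyt htx
  rcases hs with rfl | hs
  · exact ⟨e', he', hback'⟩
  · obtain rfl : s = t := by omega
    exact (hdisj he (hunique s e e' hback hback' ▸ he')).elim

theorem not_arcDisjointPaths_of_layered (α : ℕ) (hbound : ∀ x, f x < 2 * α + 2) {u z w v : V}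
    (hu : f u = 2 * α + 1) (hz : f z = 0) (hw : f w = 2 * α) (hv : f v = 1) :
    ¬ ArcDisjointPaths A u z w v := by
  rintro ⟨p, q, hp, hq, hdisj⟩
  have hdisj : (pathArcs p).Disjoint (pathArcs q) := fun _ h₁ h₂ => hdisj _ h₁ h₂
  let r : ℕ → List V := fun t => if Even t then p else q
  have hstep : ∀ t, (pathArcs (r t)).Disjoint (pathArcs (r (t + 1))) := by
    intro t
    rcases Nat.even_or_odd t with ht | ht
    · simpa [r, ht, Nat.even_add_one] using hdisj
    · simpa [r, Nat.not_even_iff_odd.mpr ht, ht.add_one] using hdisj.symm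
  have halternate : ∀ t ≤ 2 * α, ∃ e ∈ pathArcs (r t), IsBackArc A f t e := by
    intro t
    induction t with
    | zero =>
      intro _
      obtain ⟨s, hs, he⟩ := exists_isBackArc_mem_pathArcs hdown hp (t := 0) (by omega) (by omega)
      obtain rfl : s = 0 := by omega
      simpa [r] using he
    | succ t ih =>
      intro ht
      obtain ⟨e, he, hback⟩ := ih (by omega)
      rcases Nat.even_or_odd (t + 1) with heven | hodd
      · simp only [r, heven, if_true]
        exact exists_isBackArc_succ_mem_pathArcs hdown hunique (by simpa [r, heven] using hstep t)
          he hback hp (by omega) (by omega)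
      · have : t + 1 < 2 * α := by obtain ⟨k, hk⟩ := hodd; omega
        simp only [r, Nat.not_even_iff_odd.mpr hodd, if_false]
        exact exists_isBackArc_succ_mem_pathArcs hdown hunique
          (by simpa [r, Nat.not_even_iff_odd.mpr hodd] using hstep t) he hback hq (by omega)
          (by omega)
  obtain ⟨e, -, -, -, htop⟩ := halternate (2 * α) le_rfl
  exact absurd (hbound e.1) (by omega)

end Layered

theorem exists_eq_iff_mem_of_existsUnique {ι : Type*} {P : ι → Set V}
    (hpart : ∀ x, ∃! i, x ∈ P i) : ∃ g : V → ι, ∀ x i, x ∈ P i ↔ g x = i := by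
  choose g hg using hpart
  exact ⟨g, fun x i => ⟨fun h => ((hg x).2 i h).symm, fun h => h ▸ (hg x).1⟩⟩

/-- Indexing is 0-based: `P i` is `V_{i+1}` of the paper. -/
theorem stmt9 (A : V → V → Prop) (α : ℕ)
    (P : Fin (2 * α + 2) → Set V) (u w v : V)
    (hpart : ∀ x : V, ∃! i, x ∈ P i)
    (hv : v ∈ P ⟨1, by omega⟩) (hw : w ∈ P ⟨2 * α, by omega⟩)
    (hu : u ∈ P ⟨2 * α + 1, by omega⟩)
    (hback : ∀ i j : Fin (2 * α + 2), i < j → ∀ x ∈ P j, ∀ y ∈ P i, A x y →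
      (j : ℕ) = (i : ℕ) + 2)
    (huniq : ∀ i : ℕ, (h2 : i + 2 < 2 * α + 2) → ∃! e : V × V,
      e.1 ∈ P ⟨i + 2, h2⟩ ∧ e.2 ∈ P ⟨i, by omega⟩ ∧ A e.1 e.2) :
    ∀ z ∈ P ⟨0, by omega⟩, ¬ ArcDisjointPaths A u z w v := by
  intro z hz
  obtain ⟨g, hg⟩ := exists_eq_iff_mem_of_existsUnique hpart
  have hlevel : ∀ x k (hk : k < 2 * α + 2), x ∈ P ⟨k, hk⟩ ↔ (g x : ℕ) = k := fun x k hk => by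
    rw [hg, Fin.ext_iff]
  refine not_arcDisjointPaths_of_layered (f := fun x => g x) ?_ ?_ α (fun x => (g x).isLt)
    ((hlevel u _ _).mp hu) ((hlevel z _ _).mp hz) ((hlevel w _ _).mp hw) ((hlevel v _ _).mp hv)
  · intro a b hab hlt
    exact hback (g b) (g a) hlt a ((hg a _).mpr rfl) b ((hg b _).mpr rfl) hab
  · rintro s e e' ⟨he, he₂, he₁⟩ ⟨he', he₂', he₁'⟩
    have hs : s + 2 < 2 * α + 2 := he₁ ▸ (g e.1).isLt
    exact (huniq s hs).unique ⟨(hlevel _ _ _).mpr he₁, (hlevel _ _ _).mpr he₂, he⟩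
      ⟨(hlevel _ _ _).mpr he₁', (hlevel _ _ _).mpr he₂', he'⟩
end

section
/- Let D be a semicomplete digraph and x, y, z three distinct vertices such that D contains an (x,y)-path and a (y,z)-path. Then D contains arc-disjoint (x,y)- and (y,z)-paths if and only if for every arc e of D, the digraph D − e contains an (x,y)-path or a (y,z)-path. -/
variable {V : Type*}

/-!
If `y → z` is an arc, any `(x,y)`-path together with it will do. Otherwise take a shortest
`(y,z)`-path `q = y b c … z`; by minimality `y` has no arc to `c, …, z`, so by semicompleteness
all of them dominate `y`. Let `X` be the set of vertices reachable from `x` without using arcs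
of `q`. If `y ∈ X` we are done. Otherwise no vertex of `X` lies on `q` after `b`, so `bc` is the
only arc leaving `X`. Then `D - bc` has no `(x,y)`-path, hence has a `(y,z)`-path, and this path
cannot meet `X`; it is arc-disjoint from `x ⇝ b → c → y`.
-/

open Relation

section Reachability

variable {r : V → V → Prop} {a b : V}

theorem Relation.ReflTransGen.exists_rel_of_mem_of_notMem {X : Set V}
    (h : ReflTransGen r a b) (ha : a ∈ X) (hb : b ∉ X) : ∃ u v, u ∈ X ∧ v ∉ X ∧ r u v := by
  induction h with
  | refl => exact absurd ha hb
  | @tail c d _ hcd ih =>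
    by_cases hc : c ∈ X
    · exact ⟨c, d, hc, hb, hcd⟩
    · exact ih hc

theorem Relation.ReflTransGen.restrict_source_ne (h : ReflTransGen r a b) :
    ReflTransGen (fun u v => r u v ∧ u ≠ b) a b := by
  induction h using ReflTransGen.head_induction_on with
  | refl => rfl
  | @head u c huc _ ih =>
    by_cases hu : u = b
    · rw [hu]
    · exact ih.head ⟨huc, hu⟩

theorem Relation.ReflTransGen.restrict_target_ne (h : ReflTransGen r a b) :
    ReflTransGen (fun u v => r u v ∧ v ≠ a) a b := by
  induction h with
  | refl => rfl
  | @tail c d _ hcd ih =>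
    by_cases hd : d = a
    · rw [hd]
    · exact ih.tail ⟨hcd, hd⟩

theorem Relation.ReflTransGen.restrict_reachable (h : ReflTransGen r a b) :
    ReflTransGen (fun u v => r u v ∧ ReflTransGen r a u) a b := by
  induction h with
  | refl => rfl
  | @tail c d hac hcd ih => exact ih.tail ⟨hcd, hac⟩

theorem Relation.ReflTransGen.restrict_coreachable (h : ReflTransGen r a b) :
    ReflTransGen (fun u v => r u v ∧ ReflTransGen r u b) a b := by
  induction h using ReflTransGen.head_induction_on with
  | refl => rfl
  | @head u c huc hcb ih => exact ih.head ⟨huc, hcb.head huc⟩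

end Reachability

section Paths

variable {R S : V → V → Prop} {s t u v : V} {p : List V}

@[simp]
theorem pathArcs_cons_cons (u v : V) (l : List V) :
    pathArcs (u :: v :: l) = (u, v) :: pathArcs (v :: l) := rfl

theorem mem_pathArcs_iff : (u, v) ∈ pathArcs p ↔ ∃ l₁ l₂, p = l₁ ++ u :: v :: l₂ := by
  induction p using List.twoStepInduction with
  | nil => simp [pathArcs]
  | singleton a =>
    simp only [pathArcs, List.tail_cons, List.zip_nil_right, List.not_mem_nil, false_iff]
    rintro ⟨_ | ⟨_, _⟩, l₂, h⟩ <;> simp at h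
  | cons_cons a b l _ ih =>
    rw [pathArcs_cons_cons, List.mem_cons, ih, Prod.ext_iff]
    constructor
    · rintro (⟨rfl, rfl⟩ | ⟨l₁, l₂, h⟩)
      · exact ⟨[], l, rfl⟩
      · exact ⟨a :: l₁, l₂, by simp [h]⟩
    · rintro ⟨_ | ⟨a', l₁⟩, l₂, h⟩
      · simp only [List.nil_append, List.cons.injEq] at h
        exact Or.inl ⟨h.1.symm, h.2.1.symm⟩
      · simp only [List.cons_append, List.cons.injEq] at h
        exact Or.inr ⟨l₁, l₂, h.2⟩

theorem isChain_iff_forall_mem_pathArcs :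
    p.IsChain R ↔ ∀ u v, (u, v) ∈ pathArcs p → R u v := by
  simp only [List.isChain_iff_forall_rel_of_append_cons_cons, mem_pathArcs_iff]
  grind

theorem mem_of_mem_pathArcs (h : (u, v) ∈ pathArcs p) : u ∈ p ∧ v ∈ p := by
  obtain ⟨l₁, l₂, rfl⟩ := mem_pathArcs_iff.mp h
  simp

namespace IsPathOn

theorem nodup (hp : IsPathOn R s t p) : p.Nodup := hp.2.2.2.1

theorem isChain (hp : IsPathOn R s t p) : p.IsChain R := hp.2.2.2.2

theorem of_isChain (hp : IsPathOn R s t p) (hS : p.IsChain S) : IsPathOn S s t p :=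
  ⟨hp.1, hp.2.1, hp.2.2.1, hp.nodup, hS⟩

theorem mono (hp : IsPathOn R s t p) (h : ∀ u v, R u v → S u v) : IsPathOn S s t p :=
  hp.of_isChain (hp.isChain.imp fun a b => h a b)

theorem rel_of_mem_pathArcs (hp : IsPathOn R s t p) (h : (u, v) ∈ pathArcs p) : R u v :=
  isChain_iff_forall_mem_pathArcs.mp hp.isChain u v h

theorem del (hp : IsPathOn R s t p) {e : V × V} (he : e ∉ pathArcs p) :
    IsPathOn (Del R e) s t p :=
  hp.of_isChain <| isChain_iff_forall_mem_pathArcs.mpr fun _ _ huv =>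
    ⟨hp.rel_of_mem_pathArcs huv, fun h => he (h ▸ huv)⟩

theorem reflTransGen (hp : IsPathOn R s t p) : ReflTransGen R s t := by
  obtain ⟨hne, hh, hl, -, hc⟩ := hp
  obtain ⟨a, l, rfl⟩ := List.exists_cons_of_ne_nil hne
  obtain rfl : a = s := by simpa using hh
  exact List.relationReflTransGen_of_exists_isChain_cons l hc
    (Option.some_inj.mp ((List.getLast?_eq_some_getLast _).symm.trans hl))

theorem reflTransGen_pathArcs (hp : IsPathOn R s t p) :
    ReflTransGen (fun u v => (u, v) ∈ pathArcs p) s t :=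
  (hp.of_isChain (isChain_iff_forall_mem_pathArcs.mpr fun _ _ h => h)).reflTransGen

theorem snd_ne_head (hp : IsPathOn R s t p) (h : (u, v) ∈ pathArcs p) : v ≠ s := by
  rintro rfl
  obtain ⟨l₁, l₂, rfl⟩ := mem_pathArcs_iff.mp h
  obtain ⟨-, hh, -, hnd, -⟩ := hp
  rcases l₁ with _ | ⟨a, l₁⟩
  · obtain rfl : u = v := by simpa using hh
    simp at hnd
  · obtain rfl : a = v := by simpa using hh
    simp at hnd

theorem suffix {l₁ l₂ : List V} {w : V} (hp : IsPathOn R s t (l₁ ++ w :: l₂)) :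
    IsPathOn R w t (w :: l₂) := by
  obtain ⟨-, -, hl, hnd, hc⟩ := hp
  refine ⟨List.cons_ne_nil _ _, rfl, ?_, hnd.of_append_right, hc.right_of_append⟩
  rwa [List.getLast?_append_of_ne_nil _ (List.cons_ne_nil _ _)] at hl

theorem cons_s10 {w : V} (hp : IsPathOn R w t p) (hsw : R s w) (hs : s ∉ p) :
    IsPathOn R s t (s :: p) := by
  obtain ⟨hne, hh, hl, hnd, hc⟩ := hp
  obtain ⟨a, l, rfl⟩ := List.exists_cons_of_ne_nil hne
  obtain rfl : a = w := by simpa using hh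
  exact ⟨List.cons_ne_nil _ _, rfl, by simpa [List.getLast?_cons_cons] using hl,
    List.nodup_cons.mpr ⟨hs, hnd⟩, hc.cons_cons hsw⟩

theorem not_rel_of_shortest {b w : V} {l : List V} (hp : IsPathOn R s t (s :: b :: l))
    (hmin : ∀ p, IsPathOn R s t p → (s :: b :: l).length ≤ p.length) (hw : w ∈ l) :
    ¬ R s w := by
  intro hsw
  obtain ⟨l₁, l₂, rfl⟩ := List.append_of_mem hw
  have hsuffix : IsPathOn R w t (w :: l₂) := IsPathOn.suffix (l₁ := s :: b :: l₁) hp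
  have hs : s ∉ w :: l₂ := fun h => (List.nodup_cons.mp hp.nodup).1 (by simp_all)
  have := hmin _ (hsuffix.cons_s10 hsw hs)
  simp only [List.length_cons, List.length_append, add_le_add_iff_right] at this
  omega

theorem eq_cons_cons_cons (hp : IsPathOn R s t p) (hst : s ≠ t) (hR : ¬ R s t) :
    ∃ b c l, p = s :: b :: c :: l := by
  obtain ⟨hne, hh, hl, -, hc⟩ := hp
  rcases p with _ | ⟨a, _ | ⟨b, _ | ⟨c, l⟩⟩⟩
  · exact absurd rfl hne
  · simp_all
  · simp only [Option.some.injEq, List.head?_cons, List.getLast?_cons_cons,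
      List.getLast?_singleton] at hh hl
    subst hh hl
    exact absurd (List.isChain_pair.mp hc) hR
  · simp_all

end IsPathOn

theorem exists_shortest_isPathOn (h : ∃ p, IsPathOn R s t p) :
    ∃ p, IsPathOn R s t p ∧ ∀ p', IsPathOn R s t p' → p.length ≤ p'.length := by
  obtain ⟨p, hp, hmin⟩ := (measure List.length).wf.has_min {p | IsPathOn R s t p} h
  exact ⟨p, hp, fun p' hp' => not_lt.mp (hmin p' hp')⟩

theorem exists_isPathOn_of_reflTransGen (h : ReflTransGen R s t) : ∃ p, IsPathOn R s t p := by
  induction h using ReflTransGen.head_induction_on with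
  | refl => exact ⟨[t], List.cons_ne_nil _ _, rfl, rfl, List.nodup_singleton _, List.isChain_singleton _⟩
  | @head a c hac _ ih =>
    obtain ⟨p, hp⟩ := ih
    by_cases ha : a ∈ p
    · obtain ⟨l₁, l₂, rfl⟩ := List.append_of_mem ha
      exact ⟨_, hp.suffix⟩
    · exact ⟨_, hp.cons_s10 hac ha⟩

theorem exists_isPathOn_iff : (∃ p, IsPathOn R s t p) ↔ ReflTransGen R s t :=
  ⟨fun ⟨_, hp⟩ => hp.reflTransGen, exists_isPathOn_of_reflTransGen⟩

end Paths

section ArcDisjoint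

variable {A : V → V → Prop}

theorem ArcDisjointPaths.exists_isPathOn_del {x₁ y₁ x₂ y₂ : V}
    (h : ArcDisjointPaths A x₁ y₁ x₂ y₂) (e : V × V) :
    (∃ p, IsPathOn (Del A e) x₁ y₁ p) ∨ ∃ q, IsPathOn (Del A e) x₂ y₂ q := by
  obtain ⟨p, q, hp, hq, hpq⟩ := h
  by_cases he : e ∈ pathArcs p
  · exact Or.inr ⟨q, hq.del (hpq e he)⟩
  · exact Or.inl ⟨p, hp.del he⟩

theorem arcDisjointPaths_of_reflTransGen {R S : V → V → Prop} {x₁ y₁ x₂ y₂ : V}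
    (hRA : ∀ u v, R u v → A u v) (hSA : ∀ u v, S u v → A u v) (hRS : ∀ u v, R u v → ¬ S u v)
    (hR : ReflTransGen R x₁ y₁) (hS : ReflTransGen S x₂ y₂) :
    ArcDisjointPaths A x₁ y₁ x₂ y₂ := by
  obtain ⟨p, hp⟩ := exists_isPathOn_of_reflTransGen hR
  obtain ⟨q, hq⟩ := exists_isPathOn_of_reflTransGen hS
  exact ⟨p, q, hp.mono hRA, hq.mono hSA, fun ⟨u, v⟩ hup huq =>
    hRS u v (hp.rel_of_mem_pathArcs hup) (hq.rel_of_mem_pathArcs huq)⟩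

theorem arcDisjointPaths_of_rel {x y z : V} (hxy : ReflTransGen A x y) (hyz : A y z) :
    ArcDisjointPaths A x y y z :=
  arcDisjointPaths_of_reflTransGen (R := fun u v => A u v ∧ u ≠ y) (S := fun u v => u = y ∧ v = z)
    (fun _ _ h => h.1) (fun _ _ ⟨hu, hv⟩ => hu ▸ hv ▸ hyz) (fun _ _ h h' => h.2 h'.1)
    hxy.restrict_source_ne (ReflTransGen.single ⟨rfl, rfl⟩)

theorem arcDisjointPaths_of_reflTransGen_avoiding {x₁ y₁ x₂ y₂ : V} {q : List V}
    (hq : IsPathOn A x₂ y₂ q) (h : ReflTransGen (fun u v => A u v ∧ (u, v) ∉ pathArcs q) x₁ y₁) :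
    ArcDisjointPaths A x₁ y₁ x₂ y₂ :=
  arcDisjointPaths_of_reflTransGen (fun _ _ h => h.1) (fun _ _ h => hq.rel_of_mem_pathArcs h)
    (fun _ _ h => h.2) h hq.reflTransGen_pathArcs

def reachAvoiding (A : V → V → Prop) (q : List V) (x : V) : Set V :=
  {w | ReflTransGen (fun u v => A u v ∧ (u, v) ∉ pathArcs q) x w}

variable {x y z b c : V} {l : List V} (hsc : Semicomplete A)
  (hq : IsPathOn A y z (y :: b :: c :: l)) (hF : ∀ w ∈ c :: l, ¬ A y w)
  (hy : y ∉ reachAvoiding A (y :: b :: c :: l) x)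
include hsc hq hF hy

theorem notMem_reachAvoiding_of_mem {w : V} (hw : w ∈ c :: l) :
    w ∉ reachAvoiding A (y :: b :: c :: l) x := by
  intro hwX
  have hwy : w ≠ y := by
    rintro rfl
    exact (List.nodup_cons.mp hq.nodup).1 (List.mem_cons_of_mem _ hw)
  have hAwy : A w y := (hsc w y hwy).resolve_right (hF w hw)
  exact hy (hwX.tail ⟨hAwy, fun h => hq.snd_ne_head h rfl⟩)

theorem eq_of_mem_reachAvoiding_of_notMem {u v : V} (hu : u ∈ reachAvoiding A (y :: b :: c :: l) x)
    (hv : v ∉ reachAvoiding A (y :: b :: c :: l) x) (huv : A u v) : u = b ∧ v = c := by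
  have hq' : (u, v) ∈ pathArcs (y :: b :: c :: l) := by
    by_contra h
    exact hv (ReflTransGen.tail hu ⟨huv, h⟩)
  simp only [pathArcs_cons_cons, List.mem_cons, Prod.mk.injEq] at hq'
  rcases hq' with ⟨rfl, -⟩ | huv' | huv'
  · exact absurd hu hy
  · exact huv'
  · exact absurd hu (notMem_reachAvoiding_of_mem hsc hq hF hy (mem_of_mem_pathArcs huv').1)

theorem not_reflTransGen_del_of_mem_reachAvoiding {u w : V}
    (hu : u ∈ reachAvoiding A (y :: b :: c :: l) x) (hw : w ∉ reachAvoiding A (y :: b :: c :: l) x) :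
    ¬ ReflTransGen (Del A (b, c)) u w := by
  intro h
  obtain ⟨u', v', hu', hv', huv', hne⟩ := h.exists_rel_of_mem_of_notMem hu hw
  obtain ⟨rfl, rfl⟩ := eq_of_mem_reachAvoiding_of_notMem hsc hq hF hy hu' hv' huv'
  exact hne rfl

theorem arcDisjointPaths_of_notMem_reachAvoiding (hxy : ReflTransGen A x y)
    (hC : ReflTransGen (Del A (b, c)) x y ∨ ReflTransGen (Del A (b, c)) y z) :
    ArcDisjointPaths A x y y z := by
  set X := reachAvoiding A (y :: b :: c :: l) x
  have hxX : x ∈ X := ReflTransGen.refl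
  have hzX : z ∉ X := by
    refine notMem_reachAvoiding_of_mem hsc hq hF hy (List.mem_of_getLast? (l := c :: l) ?_)
    simpa [List.getLast?_cons_cons] using hq.2.2.1
  have hbX : b ∈ X := by
    obtain ⟨u, v, hu, hv, huv⟩ := hxy.exists_rel_of_mem_of_notMem hxX hy
    exact (eq_of_mem_reachAvoiding_of_notMem hsc hq hF hy hu hv huv).1 ▸ hu
  have hyz : ReflTransGen (Del A (b, c)) y z :=
    hC.resolve_left (not_reflTransGen_del_of_mem_reachAvoiding hsc hq hF hy hxX hy)
  have hbc : A b c := hq.rel_of_mem_pathArcs (by simp)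
  have hcy : A c y := by
    refine (hsc c y fun h => ?_).resolve_right (hF c List.mem_cons_self)
    exact (List.nodup_cons.mp hq.nodup).1 (by simp [h])
  -- the (x,y)-path leaves `X` only through `b c y`, the (y,z)-path never enters `X`
  refine arcDisjointPaths_of_reflTransGen (R := fun u v => A u v ∧ (u ∈ X ∨ u = c ∧ v = y))
    (S := fun u v => (Del A (b, c) u v ∧ v ≠ y) ∧
      ReflTransGen (fun u v => Del A (b, c) u v ∧ v ≠ y) u z)
    (fun _ _ h => h.1) (fun _ _ h => h.1.1.1) ?_ ?_ hyz.restrict_target_ne.restrict_coreachable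
  · rintro u v ⟨-, hu | ⟨-, rfl⟩⟩ ⟨⟨-, hv⟩, huz⟩
    · exact not_reflTransGen_del_of_mem_reachAvoiding hsc hq hF hy hu hzX
        (ReflTransGen.mono (fun _ _ h => h.1) _ _ huz)
    · exact hv rfl
  · have hxb : ReflTransGen (fun u v => A u v ∧ (u ∈ X ∨ u = c ∧ v = y)) x b :=
      ReflTransGen.mono (fun _ _ h => ⟨h.1.1, Or.inl h.2⟩) _ _
        (show ReflTransGen _ x b from hbX).restrict_reachable
    exact (hxb.tail ⟨hbc, Or.inl hbX⟩).tail ⟨hcy, Or.inr ⟨rfl, rfl⟩⟩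

end ArcDisjoint

theorem stmt10_general (A : V → V → Prop) (hsc : Semicomplete A) (x y z : V)
    (hyz : y ≠ z)
    (h1 : ∃ p : List V, IsPathOn A x y p) (h2 : ∃ p : List V, IsPathOn A y z p) :
    ArcDisjointPaths A x y y z ↔
      ∀ a b : V, A a b →
        ((∃ p : List V, IsPathOn (Del A (a, b)) x y p) ∨
          ∃ p : List V, IsPathOn (Del A (a, b)) y z p) := by
  refine ⟨fun h a b _ => h.exists_isPathOn_del (a, b), fun hC => ?_⟩
  simp only [exists_isPathOn_iff] at hC h1
  by_cases hA : A y z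
  · exact arcDisjointPaths_of_rel h1 hA
  obtain ⟨q, hq, hmin⟩ := exists_shortest_isPathOn h2
  obtain ⟨b, c, l, rfl⟩ := hq.eq_cons_cons_cons hyz hA
  have hF : ∀ w ∈ c :: l, ¬ A y w := fun _ hw => hq.not_rel_of_shortest hmin hw
  by_cases hy : y ∈ reachAvoiding A (y :: b :: c :: l) x
  · exact arcDisjointPaths_of_reflTransGen_avoiding hq hy
  · exact arcDisjointPaths_of_notMem_reachAvoiding hsc hq hF hy h1
      (hC b c (hq.rel_of_mem_pathArcs (by simp)))

/-- Arc-disjoint `(x,y)`- and `(y,z)`-paths exist iff no single arc separates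
both pairs. -/
theorem stmt10 (A : V → V → Prop) (hsc : Semicomplete A) (x y z : V)
    (hxy : x ≠ y) (hyz : y ≠ z) (hxz : x ≠ z)
    (h1 : ∃ p : List V, IsPathOn A x y p) (h2 : ∃ p : List V, IsPathOn A y z p) :
    ArcDisjointPaths A x y y z ↔
      ∀ a b : V, A a b →
        ((∃ p : List V, IsPathOn (Del A (a, b)) x y p) ∨
          ∃ p : List V, IsPathOn (Del A (a, b)) y z p) :=
  stmt10_general A hsc x y z hyz h1 h2
end

section
/- Let D be a semicomplete digraph on at least 4 vertices with a cut-arc xy. Assume D − xy has exactly two strong components, In(D − xy) = {v} = {x}, the vertex y has out-degree 1 in D with unique out-neighbor z, and D − yz contains no directed path from u to z, where u ∈ Out(D − xy). Then D has no good (u,v)-pair. -/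
variable {V : Type*}

/-! In an in-branching rooted at `x`, the vertex `y ≠ x` must leave along its only out-arc `yz`;
an arc-disjoint out-branching rooted at `u` then avoids `yz` and so contains a `(u,z)`-path of
`D - yz`. -/

theorem IsInBranching.mem_of_forall_adj_eq {A : V → V → Prop} {v y z : V} {B : Set (V × V)}
    (hB : IsInBranching A v B) (hyv : y ≠ v) (hz : ∀ t, A y t → t = z) : (y, z) ∈ B := by
  obtain ⟨w, hw, -⟩ := hB.2.2.1 y hyv
  rwa [hz w (hB.1 _ hw)] at hw

theorem IsOutBranching.reach_del_of_notMem {A : V → V → Prop} {u : V} {B : Set (V × V)}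
    {e : V × V} (hB : IsOutBranching A u B) (he : e ∉ B) (w : V) : Reach (Del A e) u w :=
  Relation.ReflTransGen.mono (fun _ _ hab => ⟨hB.1 _ hab, fun hae => he (hae ▸ hab)⟩) _ _
    (hB.2.2.2 w)

theorem stmt13_general (A : V → V → Prop)
    (hirr : Irreflexive A)
    (x y z u v : V) (hxy : A x y)
    (hvx : v = x)
    (hz1 : ∀ t : V, A y t → t = z)
    (hnopath : ¬ Reach (Del A (y, z)) u z) :
    ¬ GoodPair A u v := by
  rintro ⟨Bp, Bm, hBp, hBm, hdisj⟩
  have hyv : y ≠ v := by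
    rintro rfl
    exact hirr y (hvx ▸ hxy)
  have hyz : (y, z) ∈ Bm := hBm.mem_of_forall_adj_eq hyv hz1
  exact hnopath (hBp.reach_del_of_notMem (hdisj.notMem_of_mem_right hyz) z)

/-- Obstruction with a cut-arc `xy`: if `D - xy` has exactly two strong
components, `In(D - xy) = {v} = {x}`, `y` has unique out-neighbour `z` in `D`,
`u ∈ Out(D - xy)` and there is no `(u,z)`-path in `D - yz`, then `D` has no
good `(u,v)`-pair. -/
theorem stmt13 [Fintype V] (A : V → V → Prop) (hsc : Semicomplete A)
    (hirr : Irreflexive A) (h4 : 4 ≤ Fintype.card V) (hstrong : Strong A)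
    (x y z u v : V) (hxy : A x y) (hcut : ¬ Strong (Del A (x, y)))
    (htwo : ∃ S T : Set V, (∀ a : V, a ∈ S ↔ a ∉ T) ∧ S.Nonempty ∧ T.Nonempty ∧
      StrongOn (Del A (x, y)) S ∧ StrongOn (Del A (x, y)) T)
    (hin : InSet (Del A (x, y)) = {x}) (hvx : v = x)
    (hz : A y z) (hz1 : ∀ t : V, A y t → t = z)
    (hu : u ∈ OutSet (Del A (x, y)))
    (hnopath : ¬ Reach (Del A (y, z)) u z) :
    ¬ GoodPair A u v :=
  stmt13_general A hirr x y z u v hxy hvx hz1 hnopath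
end

section
/- Let D be a semicomplete digraph and x_1, y_1, x_2, y_2 four (not necessarily distinct) vertices such that D contains an (x_i,y_i)-path for i = 1, 2, but no pair of arc-disjoint (x_1,y_1)- and (x_2,y_2)-paths. If x_1, y_1, x_2, y_2 do not all lie in the same strong component of D, then x_1 = x_2, y_1 = y_2, and {x_1} and {y_1} are singleton strong components that are consecutive in the acyclic ordering of the strong components of D. -/
variable {V : Type*}

/-!
An arc `uv` with `v ⇝̸ u` lies on no walk between two vertices of one strong component. So if
`x₁ ⇝ y₁ ⇝ x₁`, then either `x₂, y₂` lie in one other strong component, and paths inside the two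
components share no arc, or `x₂y₂` is an arc (by semicompleteness) avoided by every `(x₁, y₁)`-path.
Hence `x₁y₁` and, symmetrically, `x₂y₂` are arcs joining different components, and they must be the
same arc. Finally, any third vertex in the component of `x₁` or of `y₁`, or between the two,
yields an `(x₁, y₁)`-path avoiding the arc `x₁y₁`.
-/

section

variable {A : V → V → Prop}

theorem ne_of_not_reach {u v : V} (h : ¬ Reach A v u) : u ≠ v :=
  fun huv => h (huv ▸ .refl)

theorem Semicomplete.adj_of_not_reach (hsc : Semicomplete A) {u v : V}
    (h : ¬ Reach A v u) : A u v :=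
  (hsc u v (ne_of_not_reach h)).resolve_right fun hvu => h (.single hvu)

theorem reach_of_isChain :
    ∀ {p : List V} {a b : V}, p.IsChain A → p.head? = some a → p.getLast? = some b →
      Reach A a b
  | [], _, _, _, ha, _ => by simp at ha
  | [c], a, b, _, ha, hb => by
    simp only [List.head?_cons, List.getLast?_singleton, Option.some.injEq] at ha hb
    exact ha ▸ hb ▸ .refl
  | c :: d :: t, a, b, hp, ha, hb => by
    rw [List.isChain_cons_cons] at hp
    simp only [List.head?_cons, Option.some.injEq] at ha
    rw [List.getLast?_cons_cons] at hb
    exact ha ▸ .head hp.1 (reach_of_isChain hp.2 rfl hb)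

theorem reach_of_mem_pathArcs_of_isChain :
    ∀ {p : List V} {a b u v : V}, p.IsChain A → p.head? = some a → p.getLast? = some b →
      (u, v) ∈ pathArcs p → Reach A a u ∧ A u v ∧ Reach A v b
  | [], _, _, _, _, _, _, _, he => by simp [pathArcs] at he
  | [_], _, _, _, _, _, _, _, he => by simp [pathArcs] at he
  | c :: d :: t, a, b, u, v, hp, ha, hb, he => by
    rw [List.isChain_cons_cons] at hp
    simp only [List.head?_cons, Option.some.injEq] at ha
    subst ha
    rw [List.getLast?_cons_cons] at hb
    simp only [pathArcs, List.tail_cons, List.zip_cons_cons, List.mem_cons,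
      Prod.mk.injEq] at he
    rcases he with ⟨rfl, rfl⟩ | he
    · exact ⟨.refl, hp.1, reach_of_isChain hp.2 rfl hb⟩
    · obtain ⟨hdu, huv, hvb⟩ := reach_of_mem_pathArcs_of_isChain hp.2 rfl hb he
      exact ⟨.head hp.1 hdu, huv, hvb⟩

theorem IsPathOn.reach {a b : V} {p : List V} (hp : IsPathOn A a b p) : Reach A a b :=
  reach_of_isChain hp.2.2.2.2 hp.2.1 hp.2.2.1

theorem IsPathOn.reach_of_mem_pathArcs {a b u v : V} {p : List V} (hp : IsPathOn A a b p)
    (he : (u, v) ∈ pathArcs p) : Reach A a u ∧ A u v ∧ Reach A v b :=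
  reach_of_mem_pathArcs_of_isChain hp.2.2.2.2 hp.2.1 hp.2.2.1 he

theorem IsPathOn.mono_s16 {B : V → V → Prop} (hAB : ∀ u v, A u v → B u v) {a b : V}
    {p : List V} (hp : IsPathOn A a b p) : IsPathOn B a b p :=
  ⟨hp.1, hp.2.1, hp.2.2.1, hp.2.2.2.1, hp.2.2.2.2.imp fun u v => hAB u v⟩

theorem isPathOn_pair {u v : V} (huv : A u v) (hne : u ≠ v) : IsPathOn A u v [u, v] :=
  ⟨by simp, rfl, rfl, by simp [hne], List.isChain_pair.2 huv⟩

theorem exists_isPathOn_of_reach {a b : V} (h : Reach A a b) : ∃ p, IsPathOn A a b p := by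
  induction h using Relation.ReflTransGen.head_induction_on with
  | refl => exact ⟨[b], by simp, rfl, rfl, by simp, .singleton _⟩
  | @head a c hac _ ih =>
    obtain ⟨p, hne, hc, hb, hnd, hch⟩ := ih
    by_cases ha : a ∈ p
    · obtain ⟨s, t, rfl⟩ := List.append_of_mem ha
      refine ⟨a :: t, by simp, rfl, ?_, ?_, hch.suffix (List.suffix_append _ _)⟩
      · simpa [List.getLast?_append] using hb
      · exact hnd.sublist (List.sublist_append_right _ _)
    · refine ⟨a :: p, by simp, rfl, ?_, List.nodup_cons.2 ⟨ha, hnd⟩, ?_⟩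
      · obtain ⟨d, p, rfl⟩ := List.exists_cons_of_ne_nil hne
        simpa [List.getLast?_cons_cons] using hb
      · exact List.isChain_cons.2 ⟨by simpa [hc] using hac, hch⟩

theorem ArcDisjointPaths.symm {x₁ y₁ x₂ y₂ : V} (h : ArcDisjointPaths A x₁ y₁ x₂ y₂) :
    ArcDisjointPaths A x₂ y₂ x₁ y₁ :=
  let ⟨p, q, hp, hq, hpq⟩ := h
  ⟨q, p, hq, hp, fun e heq hep => hpq e hep heq⟩

/-- A walk from `a` to `b` through the arc `uv` would give `a ⇝ u` and `v ⇝ b`. -/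
theorem reach_del_of_reach {a b u v : V} (hab : Reach A a b)
    (huv : ¬ (Reach A a u ∧ Reach A v b)) : Reach (Del A (u, v)) a b := by
  induction hab with
  | refl => exact .refl
  | @tail c d hac hcd ih =>
    refine .tail (ih fun h => huv ⟨h.1, h.2.tail hcd⟩) ⟨hcd, ?_⟩
    rintro ⟨rfl, rfl⟩
    exact huv ⟨hac, .refl⟩

theorem arcDisjointPaths_of_reach_del {u v a b : V} (huv : A u v) (hne : u ≠ v)
    (hab : Reach (Del A (u, v)) a b) : ArcDisjointPaths A u v a b := by
  obtain ⟨q, hq⟩ := exists_isPathOn_of_reach hab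
  refine ⟨[u, v], q, isPathOn_pair huv hne, hq.mono_s16 fun _ _ h => h.1, ?_⟩
  rintro ⟨u', v'⟩ he hq'
  obtain ⟨rfl, rfl⟩ : u' = u ∧ v' = v := by simpa [pathArcs] using he
  exact (hq.reach_of_mem_pathArcs hq').2.1.2 rfl

theorem arcDisjointPaths_of_not_reach {x y x' y' : V} (hsc : Semicomplete A)
    (hyx : ¬ Reach A y x) (hxy' : Reach A x' y') (hyx' : Reach A y' x') :
    ArcDisjointPaths A x y x' y' :=
  arcDisjointPaths_of_reach_del (hsc.adj_of_not_reach hyx) (ne_of_not_reach hyx) <|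
    reach_del_of_reach hxy' fun h => hyx (h.2.trans (hyx'.trans h.1))

/-- A shared arc `uv` of the two paths lies in the strong components of both `x` and `x'`. -/
theorem arcDisjointPaths_of_separate_components {x y x' y' : V}
    (hxy : Reach A x y) (hyx : Reach A y x) (hxy' : Reach A x' y') (hyx' : Reach A y' x')
    (hxx' : ¬ (Reach A x x' ∧ Reach A x' x)) : ArcDisjointPaths A x y x' y' := by
  obtain ⟨p, hp⟩ := exists_isPathOn_of_reach hxy
  obtain ⟨q, hq⟩ := exists_isPathOn_of_reach hxy'
  refine ⟨p, q, hp, hq, ?_⟩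
  rintro ⟨u, v⟩ hep heq
  obtain ⟨hxu, huv, hvy⟩ := hp.reach_of_mem_pathArcs hep
  obtain ⟨hxu', -, hvy'⟩ := hq.reach_of_mem_pathArcs heq
  have hux : Reach A u x := .head huv (hvy.trans hyx)
  have hux' : Reach A u x' := .head huv (hvy'.trans hyx')
  exact hxx' ⟨hxu.trans hux', hxu'.trans hux⟩

/-- A vertex `w ∉ {x, y}` on an `(x, y)`-walk gives an `(x, y)`-walk avoiding the arc `xy`: if
`y ⇝ w` then `w ⇝ x` is impossible, so `xw` is an arc, and dually on the other side of `w`. -/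
theorem eq_or_eq_of_not_arcDisjointPaths_self (hsc : Semicomplete A) {x y w : V}
    (hyx : ¬ Reach A y x) (hno : ¬ ArcDisjointPaths A x y x y)
    (hxw : Reach A x w) (hwy : Reach A w y) : w = x ∨ w = y := by
  by_contra! hw
  have hx_w : Reach (Del A (x, y)) x w := by
    by_cases hyw : Reach A y w
    · have hwx : ¬ Reach A w x := fun h => hyx (hyw.trans h)
      exact .single ⟨hsc.adj_of_not_reach hwx, fun h => hw.2 (congrArg Prod.snd h)⟩
    · exact reach_del_of_reach hxw fun h => hyw h.2
  have hw_y : Reach (Del A (x, y)) w y := by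
    by_cases hwx : Reach A w x
    · have hyw : ¬ Reach A y w := fun h => hyx (h.trans hwx)
      exact .single ⟨hsc.adj_of_not_reach hyw, fun h => hw.1 (congrArg Prod.fst h)⟩
    · exact reach_del_of_reach hwy fun h => hwx h.1
  exact hno (arcDisjointPaths_of_reach_del (hsc.adj_of_not_reach hyx) (ne_of_not_reach hyx)
    (hx_w.trans hw_y))

end

theorem stmt16_general (A : V → V → Prop) (hsc : Semicomplete A)
    (x₁ y₁ x₂ y₂ : V)
    (h1 : ∃ p : List V, IsPathOn A x₁ y₁ p)
    (h2 : ∃ p : List V, IsPathOn A x₂ y₂ p)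
    (hno : ¬ ArcDisjointPaths A x₁ y₁ x₂ y₂)
    (hns : ¬ ((Reach A x₁ y₁ ∧ Reach A y₁ x₁) ∧ (Reach A x₁ x₂ ∧ Reach A x₂ x₁) ∧
      (Reach A x₁ y₂ ∧ Reach A y₂ x₁))) :
    x₁ = x₂ ∧ y₁ = y₂ ∧ x₁ ≠ y₁ ∧
      (∀ w, Reach A x₁ w → Reach A w x₁ → w = x₁) ∧
      (∀ w, Reach A y₁ w → Reach A w y₁ → w = y₁) ∧
      A x₁ y₁ ∧ ¬ ∃ w, w ≠ x₁ ∧ w ≠ y₁ ∧ Reach A x₁ w ∧ Reach A w y₁ := by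
  have hxy₁ := h1.choose_spec.reach
  have hxy₂ := h2.choose_spec.reach
  have hyx₁ : ¬ Reach A y₁ x₁ := by
    intro hyx₁
    by_cases hyx₂ : Reach A y₂ x₂
    · refine hno (arcDisjointPaths_of_separate_components hxy₁ hyx₁ hxy₂ hyx₂ fun h => hns ?_)
      exact ⟨⟨hxy₁, hyx₁⟩, h, h.1.trans hxy₂, hyx₂.trans h.2⟩
    · exact hno (arcDisjointPaths_of_not_reach hsc hyx₂ hxy₁ hyx₁).symm
  have hyx₂ : ¬ Reach A y₂ x₂ := fun hyx₂ =>
    hno (arcDisjointPaths_of_not_reach hsc hyx₁ hxy₂ hyx₂)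
  obtain ⟨rfl, rfl⟩ : x₁ = x₂ ∧ y₁ = y₂ := by
    by_contra h
    refine hno (arcDisjointPaths_of_reach_del (hsc.adj_of_not_reach hyx₁) (ne_of_not_reach hyx₁)
      (.single ⟨hsc.adj_of_not_reach hyx₂, fun he => h ?_⟩))
    simpa [eq_comm] using he
  have hbetween := fun w => eq_or_eq_of_not_arcDisjointPaths_self (w := w) hsc hyx₁ hno
  refine ⟨rfl, rfl, ne_of_not_reach hyx₁, fun w hxw hwx => ?_, fun w hyw hwy => ?_,
    hsc.adj_of_not_reach hyx₁, fun ⟨w, hwx, hwy, hxw, hwy'⟩ => (hbetween w hxw hwy').elim hwx hwy⟩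
  · exact (hbetween w hxw (hwx.trans hxy₁)).resolve_right fun h => hyx₁ (h ▸ hwx)
  · exact (hbetween w (hxy₁.trans hyw) hwy).resolve_left fun h => hyx₁ (h ▸ hyw)

/-- If a semicomplete digraph has `(x₁,y₁)`- and `(x₂,y₂)`-paths but no
arc-disjoint such pair, and the four vertices are not all in one strong
component, then `x₁ = x₂`, `y₁ = y₂` and `{x₁}, {y₁}` are consecutive singleton
strong components. -/
theorem stmt16 [Fintype V] (A : V → V → Prop) (hsc : Semicomplete A)
    (hirr : Irreflexive A) (x₁ y₁ x₂ y₂ : V)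
    (h1 : ∃ p : List V, IsPathOn A x₁ y₁ p)
    (h2 : ∃ p : List V, IsPathOn A x₂ y₂ p)
    (hno : ¬ ArcDisjointPaths A x₁ y₁ x₂ y₂)
    (hns : ¬ ((Reach A x₁ y₁ ∧ Reach A y₁ x₁) ∧ (Reach A x₁ x₂ ∧ Reach A x₂ x₁) ∧
      (Reach A x₁ y₂ ∧ Reach A y₂ x₁))) :
    x₁ = x₂ ∧ y₁ = y₂ ∧ x₁ ≠ y₁ ∧
      (∀ w, Reach A x₁ w → Reach A w x₁ → w = x₁) ∧
      (∀ w, Reach A y₁ w → Reach A w y₁ → w = y₁) ∧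
      A x₁ y₁ ∧ ¬ ∃ w, w ≠ x₁ ∧ w ≠ y₁ ∧ Reach A x₁ w ∧ Reach A w y₁ :=
  stmt16_general A hsc x₁ y₁ x₂ y₂ h1 h2 hno hns
end

section
/- Let D be a strong semicomplete digraph and u, v vertices of D. If there exists an arc e of D such that u is not in the initial strong component of D − e and v is not in the terminal strong component of D − e, then D has no out-branching rooted at u arc-disjoint from an in-branching rooted at v. -/
variable {V : Type*}

theorem reach_del_of_reflTransGen_mem {A : V → V → Prop} {B : Set (V × V)} {e : V × V}
    (hBA : ∀ p ∈ B, A p.1 p.2) (he : e ∉ B) {x y : V}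
    (hxy : Relation.ReflTransGen (fun a b => (a, b) ∈ B) x y) : Reach (Del A e) x y :=
  Relation.ReflTransGen.mono (fun _ _ hab => ⟨hBA _ hab, fun hae => he (hae ▸ hab)⟩) _ _ hxy

theorem IsOutBranching.mem_outSet_del {A : V → V → Prop} {u : V} {B : Set (V × V)}
    {e : V × V} (hB : IsOutBranching A u B) (he : e ∉ B) : u ∈ OutSet (Del A e) :=
  fun y => reach_del_of_reflTransGen_mem hB.1 he (hB.2.2.2 y)

theorem IsInBranching.mem_inSet_del {A : V → V → Prop} {v : V} {B : Set (V × V)}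
    {e : V × V} (hB : IsInBranching A v B) (he : e ∉ B) : v ∈ InSet (Del A e) :=
  fun x => reach_del_of_reflTransGen_mem hB.1 he (hB.2.2.2 x)

theorem stmt18_general (A : V → V → Prop) (u v : V)
    (h : ∃ e : V × V, A e.1 e.2 ∧ u ∉ OutSet (Del A e) ∧ v ∉ InSet (Del A e)) :
    ¬ GoodPair A u v := by
  rintro ⟨Bp, Bm, hBp, hBm, hdisj⟩
  obtain ⟨e, -, hu, hv⟩ := h
  have hep : e ∈ Bp := by_contra fun he => hu (hBp.mem_outSet_del he)
  have hem : e ∈ Bm := by_contra fun he => hv (hBm.mem_inSet_del he)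
  exact Set.disjoint_left.mp hdisj hep hem

/-- In a strong semicomplete digraph, if some arc `e` satisfies that `u` is not
in the initial strong component of `D - e` (= `Out(D - e)`) and `v` is not in
the terminal strong component of `D - e` (= `In(D - e)`), then there is no good
`(u,v)`-pair. -/
theorem stmt18 [Fintype V] (A : V → V → Prop) (hsc : Semicomplete A)
    (hirr : Irreflexive A) (hstrong : Strong A) (u v : V)
    (h : ∃ e : V × V, A e.1 e.2 ∧ u ∉ OutSet (Del A e) ∧ v ∉ InSet (Del A e)) :
    ¬ GoodPair A u v :=
  stmt18_general A u v h
end
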